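/- arXiv:2209.11840 — 6 statements merged into one kernel-verified Lean document; each statement's English description precedes it below -/
import Mathlib

section
/- (Corollary 3.1(b).) If (Y(1),Y(0)) is conditionally independent of (R(1),R(0)) given X, then theta_drop = E[tau(X) rho(X)], where tau(x) = E[Y(1) - Y(0) | X = x] and rho(x) = E[R(0)|X=x] E[R(1)|X=x] / E[E[R(0)|X] E[R(1)|X]]. -/
open MeasureTheory ProbabilityTheory

/-!
Conditional independence given `X` makes the conditional law of `((Y 1, Y 0), (R 1, R 0))` given
`X` a product measure for almost every `ω`, so that `E[Y(d) R(d) | X] = E[Y(d) | X] E[R(d) | X]`.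
The numerator of `θ_drop` then becomes `E[(E[Y(1)|X] - E[Y(0)|X]) E[R(1)|X] E[R(0)|X]]`, which is
`E[τ(X) E[R(1)|X] E[R(0)|X]]`.
-/

namespace ProbabilityTheory

variable {Ω : Type*} {m' mΩ : MeasurableSpace Ω} [StandardBorelSpace Ω] {hm' : m' ≤ mΩ}
  {μ : Measure Ω} [IsFiniteMeasure μ]

theorem CondIndepFun.ae_indepFun_condExpKernel {β β' : Type*} [MeasurableSpace β]
    [MeasurableSpace β'] [MeasurableSpace.CountablyGenerated (β × β')]
    {f : Ω → β} {g : Ω → β'}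
    (h : CondIndepFun m' hm' f g μ) (hf : Measurable f) (hg : Measurable g) :
    ∀ᵐ ω ∂μ, IndepFun f g (condExpKernel μ m' ω) := by
  filter_upwards [ae_of_ae_trim hm' ((condIndepFun_iff_map_prod_eq_prod_map_map hf hg).1 h)]
    with ω hω
  rw [indepFun_iff_map_prod_eq_prod_map_map hf.aemeasurable hg.aemeasurable]
  simpa [Kernel.map_apply _ (hf.prodMk hg), Kernel.map_apply _ hf, Kernel.map_apply _ hg,
    Kernel.prod_apply] using hω

theorem CondIndepFun.condExp_mul {f g : Ω → ℝ} (h : CondIndepFun m' hm' f g μ)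
    (hf : Measurable f) (hg : Measurable g) (hfi : Integrable f μ) (hgi : Integrable g μ)
    (hfgi : Integrable (f * g) μ) :
    μ[f * g | m'] =ᵐ[μ] μ[f | m'] * μ[g | m'] := by
  filter_upwards [condExp_ae_eq_integral_condExpKernel hm' hfgi,
    condExp_ae_eq_integral_condExpKernel hm' hfi, condExp_ae_eq_integral_condExpKernel hm' hgi,
    h.ae_indepFun_condExpKernel hf hg] with ω hfg hf' hg' hind
  rw [hfg, Pi.mul_apply, hf', hg']
  exact hind.integral_mul_eq_mul_integral hf.aestronglyMeasurable hg.aestronglyMeasurable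

theorem CondIndepFun.condExp_mul_of_abs_le {f g : Ω → ℝ} (h : CondIndepFun m' hm' f g μ)
    (hf : Measurable f) (hg : Measurable g) (hfi : Integrable f μ) {C : ℝ}
    (hgC : ∀ᵐ ω ∂μ, |g ω| ≤ C) :
    μ[f * g | m'] =ᵐ[μ] μ[f | m'] * μ[g | m'] :=
  h.condExp_mul hf hg hfi (.of_bound hg.aestronglyMeasurable C hgC)
    (hfi.mul_bdd hg.aestronglyMeasurable hgC)

end ProbabilityTheory

theorem corollary_3_1_b_general
    {Ω : Type*} [MeasurableSpace Ω] [StandardBorelSpace Ω]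
    (μ : Measure Ω) [IsProbabilityMeasure μ]
    {k : ℕ} (Y : Fin 2 → Ω → ℝ) (R : Fin 2 → Ω → ℝ) (X : Ω → Fin k → ℝ)
    (hYmeas : ∀ d, Measurable (Y d)) (hRmeas : ∀ d, Measurable (R d))
    (hR01 : ∀ d ω, R d ω = 0 ∨ R d ω = 1)
    (hYint : ∀ d, Integrable (Y d) μ)
    (hle : MeasurableSpace.comap X inferInstance ≤ ‹MeasurableSpace Ω›)
    (r : Fin 2 → (Fin k → ℝ) → ℝ) (yr : Fin 2 → (Fin k → ℝ) → ℝ)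
    (τ : (Fin k → ℝ) → ℝ)
    (hr : ∀ d, μ[R d | MeasurableSpace.comap X inferInstance]
      =ᵐ[μ] fun ω => r d (X ω))
    (hyr : ∀ d, μ[fun ω => Y d ω * R d ω | MeasurableSpace.comap X inferInstance]
      =ᵐ[μ] fun ω => yr d (X ω))
    (hτ : μ[fun ω => Y 1 ω - Y 0 ω | MeasurableSpace.comap X inferInstance]
      =ᵐ[μ] fun ω => τ (X ω))
    (hCI : CondIndepFun (MeasurableSpace.comap X inferInstance) hle
      (fun ω => (Y 1 ω, Y 0 ω)) (fun ω => (R 1 ω, R 0 ω)) μ) :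
    ((∫ ω, yr 1 (X ω) * r 0 (X ω) ∂μ) - ∫ ω, yr 0 (X ω) * r 1 (X ω) ∂μ)
        / (∫ ω, r 1 (X ω) * r 0 (X ω) ∂μ)
      = ∫ ω, τ (X ω) *
          (r 0 (X ω) * r 1 (X ω) / ∫ ω', r 0 (X ω') * r 1 (X ω') ∂μ) ∂μ := by
  have hRbdd (d : Fin 2) : ∀ᵐ ω ∂μ, |R d ω| ≤ 1 :=
    ae_of_all _ fun ω => by rcases hR01 d ω with h | h <;> simp [h]
  have hrbdd (d : Fin 2) : ∀ᵐ ω ∂μ, ‖r d (X ω)‖ ≤ 1 := by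
    filter_upwards [ae_bdd_abs_condExp_of_ae_bdd_abs
      (m := MeasurableSpace.comap X inferInstance) (hRbdd d), hr d] with ω h hω
    simpa [hω] using h
  have hfactor (d : Fin 2) : (fun ω => yr d (X ω))
      =ᵐ[μ] μ[Y d | MeasurableSpace.comap X inferInstance] * fun ω => r d (X ω) := by
    have hind : CondIndepFun (MeasurableSpace.comap X inferInstance) hle (Y d) (R d) μ := by
      fin_cases d
      exacts [hCI.comp measurable_snd measurable_snd, hCI.comp measurable_fst measurable_fst]
    refine (hyr d).symm.trans
      ((hind.condExp_mul_of_abs_le (hYmeas d) (hRmeas d) (hYint d) (hRbdd d)).trans ?_)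
    filter_upwards [hr d] with ω hω
    simp [hω]
  have hyrint (d d' : Fin 2) : Integrable (fun ω => yr d (X ω) * r d' (X ω)) μ :=
    (integrable_condExp.congr (hyr d)).mul_bdd
      (integrable_condExp.congr (hr d')).aestronglyMeasurable (hrbdd d')
  have hτ' : (fun ω => τ (X ω)) =ᵐ[μ] μ[Y 1 | MeasurableSpace.comap X inferInstance]
      - μ[Y 0 | MeasurableSpace.comap X inferInstance] :=
    hτ.symm.trans (condExp_sub (hYint 1) (hYint 0) _)
  have hcomm : ∫ ω, r 0 (X ω) * r 1 (X ω) ∂μ = ∫ ω, r 1 (X ω) * r 0 (X ω) ∂μ := by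
    simp_rw [mul_comm]
  rw [← integral_sub (hyrint 1 0) (hyrint 0 1), hcomm, ← integral_div]
  refine integral_congr_ae ?_
  filter_upwards [hfactor 0, hfactor 1, hτ'] with ω h0 h1 hτω
  simp only [h0, h1, hτω, Pi.mul_apply, Pi.sub_apply]
  ring

/-- Corollary 3.1(b): if `(Y(1), Y(0))` is conditionally independent of `(R(1), R(0))` given `X`,
then `θ_drop = E[τ(X) ρ(X)]`, where `τ(x) = E[Y(1) - Y(0) | X = x]` and
`ρ(x) = E[R(0)|X=x] E[R(1)|X=x] / E[E[R(0)|X] E[R(1)|X]]`.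
Here `r d`, `yr d` and `τ` are (regular) versions of the conditional expectations
`E[R(d)|X=·]`, `E[Y(d)R(d)|X=·]` and `E[Y(1)-Y(0)|X=·]`, respectively. -/
theorem corollary_3_1_b
    {Ω : Type*} [MeasurableSpace Ω] [StandardBorelSpace Ω] [Nonempty Ω]
    (μ : Measure Ω) [IsProbabilityMeasure μ]
    {k : ℕ} (Y : Fin 2 → Ω → ℝ) (R : Fin 2 → Ω → ℝ) (X : Ω → Fin k → ℝ)
    (hYmeas : ∀ d, Measurable (Y d)) (hRmeas : ∀ d, Measurable (R d))
    (hXmeas : Measurable X)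
    (hR01 : ∀ d ω, R d ω = 0 ∨ R d ω = 1)
    (hYint : ∀ d, Integrable (Y d) μ)
    (hRpos : ∀ d, 0 < ∫ ω, R d ω ∂μ)
    (hle : MeasurableSpace.comap X inferInstance ≤ ‹MeasurableSpace Ω›)
    (r : Fin 2 → (Fin k → ℝ) → ℝ) (yr : Fin 2 → (Fin k → ℝ) → ℝ)
    (τ : (Fin k → ℝ) → ℝ)
    (hr : ∀ d, μ[R d | MeasurableSpace.comap X inferInstance]
      =ᵐ[μ] fun ω => r d (X ω))
    (hyr : ∀ d, μ[fun ω => Y d ω * R d ω | MeasurableSpace.comap X inferInstance]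
      =ᵐ[μ] fun ω => yr d (X ω))
    (hτ : μ[fun ω => Y 1 ω - Y 0 ω | MeasurableSpace.comap X inferInstance]
      =ᵐ[μ] fun ω => τ (X ω))
    (hdenpos : 0 < ∫ ω, r 1 (X ω) * r 0 (X ω) ∂μ)
    (hCI : CondIndepFun (MeasurableSpace.comap X inferInstance) hle
      (fun ω => (Y 1 ω, Y 0 ω)) (fun ω => (R 1 ω, R 0 ω)) μ) :
    ((∫ ω, yr 1 (X ω) * r 0 (X ω) ∂μ) - ∫ ω, yr 0 (X ω) * r 1 (X ω) ∂μ)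
        / (∫ ω, r 1 (X ω) * r 0 (X ω) ∂μ)
      = ∫ ω, τ (X ω) *
          (r 0 (X ω) * r 1 (X ω) / ∫ ω', r 0 (X ω') * r 1 (X ω') ∂μ) ∂μ :=
  corollary_3_1_b_general μ Y R X hYmeas hRmeas hR01 hYint hle r yr τ hr hyr hτ hCI
end

section
/- The weights rho(x) = E[R(0)|X=x] E[R(1)|X=x] / E[E[R(0)|X] E[R(1)|X]] are convex weights: rho(X) >= 0 almost surely and E[rho(X)] = 1. Consequently, under conditional independence of (Y(1),Y(0)) and (R(1),R(0)) given X, theta_drop = E[tau(X) rho(X)] is a convex weighted average of the conditional average treatment effects tau(x) = E[Y(1) - Y(0) | X = x]. -/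
/-!
Since `r d (X) = E[R(d) | X]` takes values in `[0, 1]`, the weight `ρ(X)` is nonnegative, and it
has mean one because it is normalised by its own mean. For the representation of `θ_drop`,
conditional independence given `X` means that the regular conditional distribution of
`(Y(d), R(d))` given `X` is almost surely a product measure, so
`E[Y(d) R(d) | X] = E[Y(d) | X] E[R(d) | X]`. The numerator of `θ_drop` is then
`E[(E[Y(1) | X] - E[Y(0) | X]) r₁(X) r₀(X)] = E[τ(X) r₁(X) r₀(X)]`.
-/

open MeasureTheory ProbabilityTheory

section CondIndep

variable {Ω β γ : Type*} {m mΩ : MeasurableSpace Ω} [StandardBorelSpace Ω]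
  {μ : Measure Ω} [IsFiniteMeasure μ]

theorem ProbabilityTheory.CondIndepFun.ae_indepFun_condExpKernel_s5
    {mβ : MeasurableSpace β} {mγ : MeasurableSpace γ}
    [MeasurableSpace.CountablyGenerated β] [MeasurableSpace.CountablyGenerated γ]
    {hm : m ≤ mΩ} {f : Ω → β} {g : Ω → γ} (hf : Measurable f) (hg : Measurable g)
    (hfg : CondIndepFun m hm f g μ) :
    ∀ᵐ ω ∂μ, IndepFun f g (condExpKernel μ m ω) := by
  -- Countable generation of `β × γ` is what lets "for all measurable sets, a.e." become
  -- "a.e., for all measurable sets".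
  rw [condIndepFun_iff_map_prod_eq_prod_map_map hf hg] at hfg
  refine ae_of_ae_trim hm ?_
  filter_upwards [hfg] with ω hω
  rw [indepFun_iff_map_prod_eq_prod_map_map hf.aemeasurable hg.aemeasurable]
  simpa [Kernel.prod_apply, Kernel.map_apply _ hf, Kernel.map_apply _ hg,
    Kernel.map_apply _ (hf.prodMk hg)] using hω

theorem condExp_mul_ae_eq_of_condIndepFun (hm : m ≤ mΩ) {f g : Ω → ℝ}
    (hf : Measurable f) (hg : Measurable g)
    (hfi : Integrable f μ) (hgi : Integrable g μ) (hfgi : Integrable (f * g) μ)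
    (hfg : CondIndepFun m hm f g μ) :
    μ[f * g|m] =ᵐ[μ] μ[f|m] * μ[g|m] := by
  filter_upwards [hfg.ae_indepFun_condExpKernel_s5 hf hg,
    condExp_ae_eq_integral_condExpKernel hm hfgi, condExp_ae_eq_integral_condExpKernel hm hfi,
    condExp_ae_eq_integral_condExpKernel hm hgi] with ω hω hfg hf' hg'
  rw [Pi.mul_apply, hfg, hf', hg']
  exact hω.integral_mul_eq_mul_integral hf.aestronglyMeasurable hg.aestronglyMeasurable

end CondIndep

theorem ae_condExp_mem_Icc_zero_one {Ω : Type*} {m mΩ : MeasurableSpace Ω} {μ : Measure Ω}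
    [IsFiniteMeasure μ] (hm : m ≤ mΩ) {f : Ω → ℝ} (hfi : Integrable f μ)
    (hf : ∀ᵐ ω ∂μ, f ω ∈ Set.Icc (0 : ℝ) 1) :
    ∀ᵐ ω ∂μ, μ[f|m] ω ∈ Set.Icc (0 : ℝ) 1 := by
  have hle : μ[f|m] ≤ᵐ[μ] μ[fun _ => (1 : ℝ)|m] :=
    condExp_mono hfi (integrable_const 1) (hf.mono fun _ h => h.2)
  filter_upwards [condExp_nonneg (hf.mono fun _ h => h.1), hle] with ω h0 h1
  exact ⟨h0, by simpa [condExp_const hm] using h1⟩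

section Attrition

variable {Ω β : Type*} [MeasurableSpace Ω] [MeasurableSpace β] {μ : Measure Ω}
  [IsFiniteMeasure μ] {X : Ω → β}

theorem ae_response_prob_mem_Icc {R : Ω → ℝ} {r : β → ℝ} (hRmeas : Measurable R)
    (hR01 : ∀ ω, R ω = 0 ∨ R ω = 1)
    (hle : MeasurableSpace.comap X inferInstance ≤ ‹MeasurableSpace Ω›)
    (hr : μ[R | MeasurableSpace.comap X inferInstance] =ᵐ[μ] fun ω => r (X ω)) :
    ∀ᵐ ω ∂μ, r (X ω) ∈ Set.Icc (0 : ℝ) 1 := by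
  have hR : ∀ᵐ ω ∂μ, R ω ∈ Set.Icc (0 : ℝ) 1 :=
    ae_of_all _ fun ω => by rcases hR01 ω with h | h <;> simp [h]
  filter_upwards [ae_condExp_mem_Icc_zero_one hle
    (.of_mem_Icc 0 1 hRmeas.aemeasurable hR) hR, hr] with ω h h'
  rwa [← h']

theorem yr_comp_ae_eq_condExp_mul [StandardBorelSpace Ω] {Y R : Ω → ℝ} {r yr : β → ℝ}
    (hYmeas : Measurable Y) (hRmeas : Measurable R) (hR01 : ∀ ω, R ω = 0 ∨ R ω = 1)
    (hYint : Integrable Y μ)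
    (hle : MeasurableSpace.comap X inferInstance ≤ ‹MeasurableSpace Ω›)
    (hr : μ[R | MeasurableSpace.comap X inferInstance] =ᵐ[μ] fun ω => r (X ω))
    (hyr : μ[fun ω => Y ω * R ω | MeasurableSpace.comap X inferInstance]
      =ᵐ[μ] fun ω => yr (X ω))
    (hCI : CondIndepFun (MeasurableSpace.comap X inferInstance) hle Y R μ) :
    (fun ω => yr (X ω)) =ᵐ[μ]
      fun ω => μ[Y | MeasurableSpace.comap X inferInstance] ω * r (X ω) := by
  have hR : ∀ᵐ ω ∂μ, ‖R ω‖ ≤ 1 :=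
    ae_of_all _ fun ω => by rcases hR01 ω with h | h <;> simp [h]
  have hRint : Integrable R μ := (integrable_const 1).mono' hRmeas.aestronglyMeasurable hR
  have hYRint : Integrable (Y * R) μ := hYint.mul_bdd hRmeas.aestronglyMeasurable hR
  filter_upwards [hyr, hr, condExp_mul_ae_eq_of_condIndepFun hle hYmeas hRmeas hYint hRint
    hYRint hCI] with ω hyrω hrω hprod
  rw [← hyrω, ← hrω]
  exact hprod

theorem sub_integral_yr_mul_eq_integral_cate_mul [StandardBorelSpace Ω] {Y R : Fin 2 → Ω → ℝ} {r yr : Fin 2 → β → ℝ} {τ : β → ℝ}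
    (hYmeas : ∀ d, Measurable (Y d)) (hRmeas : ∀ d, Measurable (R d))
    (hR01 : ∀ d ω, R d ω = 0 ∨ R d ω = 1) (hYint : ∀ d, Integrable (Y d) μ)
    (hle : MeasurableSpace.comap X inferInstance ≤ ‹MeasurableSpace Ω›)
    (hr : ∀ d, μ[R d | MeasurableSpace.comap X inferInstance] =ᵐ[μ] fun ω => r d (X ω))
    (hyr : ∀ d, μ[fun ω => Y d ω * R d ω | MeasurableSpace.comap X inferInstance]
      =ᵐ[μ] fun ω => yr d (X ω))
    (hτ : μ[fun ω => Y 1 ω - Y 0 ω | MeasurableSpace.comap X inferInstance]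
      =ᵐ[μ] fun ω => τ (X ω))
    (hCI : CondIndepFun (MeasurableSpace.comap X inferInstance) hle
      (fun ω => (Y 1 ω, Y 0 ω)) (fun ω => (R 1 ω, R 0 ω)) μ) :
    (∫ ω, yr 1 (X ω) * r 0 (X ω) ∂μ) - ∫ ω, yr 0 (X ω) * r 1 (X ω) ∂μ
      = ∫ ω, τ (X ω) * (r 1 (X ω) * r 0 (X ω)) ∂μ := by
  have hCId : ∀ d, CondIndepFun (MeasurableSpace.comap X inferInstance) hle (Y d) (R d) μ := by
    intro d
    fin_cases d
    exacts [hCI.comp measurable_snd measurable_snd, hCI.comp measurable_fst measurable_fst]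
  have hyr_eq d := yr_comp_ae_eq_condExp_mul (hYmeas d) (hRmeas d) (hR01 d) (hYint d) hle
    (hr d) (hyr d) (hCId d)
  have hτ_eq : (fun ω => τ (X ω)) =ᵐ[μ] μ[Y 1 | MeasurableSpace.comap X inferInstance]
      - μ[Y 0 | MeasurableSpace.comap X inferInstance] :=
    hτ.symm.trans (condExp_sub (hYint 1) (hYint 0) _)
  have hint d d' : Integrable (fun ω => yr d (X ω) * r d' (X ω)) μ := by
    have hr01 := ae_response_prob_mem_Icc (hRmeas d') (hR01 d') hle (hr d')
    refine (integrable_condExp.congr (hyr d)).mul_bdd (c := 1)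
      ((stronglyMeasurable_condExp.mono hle).aestronglyMeasurable.congr (hr d')) ?_
    filter_upwards [hr01] with ω h
    exact abs_le.mpr ⟨by linarith [h.1], h.2⟩
  rw [← integral_sub (hint 1 0) (hint 0 1)]
  refine integral_congr_ae ?_
  filter_upwards [hyr_eq 0, hyr_eq 1, hτ_eq] with ω h0 h1 hτω
  rw [h0, h1, hτω, Pi.sub_apply]
  ring

end Attrition

theorem rho_convex_weights_general
    {Ω : Type*} [MeasurableSpace Ω] [StandardBorelSpace Ω]
    (μ : Measure Ω) [IsProbabilityMeasure μ]
    {k : ℕ} (Y : Fin 2 → Ω → ℝ) (R : Fin 2 → Ω → ℝ) (X : Ω → Fin k → ℝ)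
    (hYmeas : ∀ d, Measurable (Y d)) (hRmeas : ∀ d, Measurable (R d))
    (hR01 : ∀ d ω, R d ω = 0 ∨ R d ω = 1)
    (hYint : ∀ d, Integrable (Y d) μ)
    (hle : MeasurableSpace.comap X inferInstance ≤ ‹MeasurableSpace Ω›)
    (r : Fin 2 → (Fin k → ℝ) → ℝ) (yr : Fin 2 → (Fin k → ℝ) → ℝ)
    (τ : (Fin k → ℝ) → ℝ) (ρ : (Fin k → ℝ) → ℝ)
    (hr : ∀ d, μ[R d | MeasurableSpace.comap X inferInstance]
      =ᵐ[μ] fun ω => r d (X ω))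
    (hyr : ∀ d, μ[fun ω => Y d ω * R d ω | MeasurableSpace.comap X inferInstance]
      =ᵐ[μ] fun ω => yr d (X ω))
    (hτ : μ[fun ω => Y 1 ω - Y 0 ω | MeasurableSpace.comap X inferInstance]
      =ᵐ[μ] fun ω => τ (X ω))
    (hdenpos : 0 < ∫ ω, r 1 (X ω) * r 0 (X ω) ∂μ)
    (hρ : ∀ x, ρ x = r 0 x * r 1 x / ∫ ω, r 0 (X ω) * r 1 (X ω) ∂μ) :
    (∀ᵐ ω ∂μ, 0 ≤ ρ (X ω)) ∧ (∫ ω, ρ (X ω) ∂μ = 1) ∧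
      (CondIndepFun (MeasurableSpace.comap X inferInstance) hle
          (fun ω => (Y 1 ω, Y 0 ω)) (fun ω => (R 1 ω, R 0 ω)) μ →
        ((∫ ω, yr 1 (X ω) * r 0 (X ω) ∂μ) - ∫ ω, yr 0 (X ω) * r 1 (X ω) ∂μ)
            / (∫ ω, r 1 (X ω) * r 0 (X ω) ∂μ)
          = ∫ ω, τ (X ω) * ρ (X ω) ∂μ) := by
  have hden_comm : ∫ ω, r 0 (X ω) * r 1 (X ω) ∂μ = ∫ ω, r 1 (X ω) * r 0 (X ω) ∂μ := by
    simp_rw [mul_comm (r 0 _)]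
  refine ⟨?_, ?_, fun hCI => ?_⟩
  · filter_upwards [ae_response_prob_mem_Icc (hRmeas 0) (hR01 0) hle (hr 0),
      ae_response_prob_mem_Icc (hRmeas 1) (hR01 1) hle (hr 1)] with ω h0 h1
    rw [hρ, hden_comm]
    exact div_nonneg (mul_nonneg h0.1 h1.1) hdenpos.le
  · simp_rw [hρ]
    rw [integral_div, div_self (hden_comm ▸ hdenpos).ne']
  · rw [sub_integral_yr_mul_eq_integral_cate_mul hYmeas hRmeas hR01 hYint hle hr hyr hτ hCI]
    simp_rw [hρ, hden_comm, mul_div_assoc', integral_div, mul_comm (r 0 _)]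

/-- The weights `ρ(x) = E[R(0)|X=x] E[R(1)|X=x] / E[E[R(0)|X] E[R(1)|X]]` are convex weights:
`ρ(X) ≥ 0` a.s. and `E[ρ(X)] = 1`. Consequently, under conditional independence of
`(Y(1), Y(0))` and `(R(1), R(0))` given `X`,
`θ_drop = E[τ(X) ρ(X)]` is a convex weighted average of the conditional average treatment
effects `τ(x) = E[Y(1) - Y(0) | X = x]`. -/
theorem rho_convex_weights
    {Ω : Type*} [MeasurableSpace Ω] [StandardBorelSpace Ω] [Nonempty Ω]
    (μ : Measure Ω) [IsProbabilityMeasure μ]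
    {k : ℕ} (Y : Fin 2 → Ω → ℝ) (R : Fin 2 → Ω → ℝ) (X : Ω → Fin k → ℝ)
    (hYmeas : ∀ d, Measurable (Y d)) (hRmeas : ∀ d, Measurable (R d))
    (hXmeas : Measurable X)
    (hR01 : ∀ d ω, R d ω = 0 ∨ R d ω = 1)
    (hYint : ∀ d, Integrable (Y d) μ)
    (hRpos : ∀ d, 0 < ∫ ω, R d ω ∂μ)
    (hle : MeasurableSpace.comap X inferInstance ≤ ‹MeasurableSpace Ω›)
    (r : Fin 2 → (Fin k → ℝ) → ℝ) (yr : Fin 2 → (Fin k → ℝ) → ℝ)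
    (τ : (Fin k → ℝ) → ℝ) (ρ : (Fin k → ℝ) → ℝ)
    (hr : ∀ d, μ[R d | MeasurableSpace.comap X inferInstance]
      =ᵐ[μ] fun ω => r d (X ω))
    (hyr : ∀ d, μ[fun ω => Y d ω * R d ω | MeasurableSpace.comap X inferInstance]
      =ᵐ[μ] fun ω => yr d (X ω))
    (hτ : μ[fun ω => Y 1 ω - Y 0 ω | MeasurableSpace.comap X inferInstance]
      =ᵐ[μ] fun ω => τ (X ω))
    (hdenpos : 0 < ∫ ω, r 1 (X ω) * r 0 (X ω) ∂μ)
    (hρ : ∀ x, ρ x = r 0 x * r 1 x / ∫ ω, r 0 (X ω) * r 1 (X ω) ∂μ) :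
    (∀ᵐ ω ∂μ, 0 ≤ ρ (X ω)) ∧ (∫ ω, ρ (X ω) ∂μ = 1) ∧
      (CondIndepFun (MeasurableSpace.comap X inferInstance) hle
          (fun ω => (Y 1 ω, Y 0 ω)) (fun ω => (R 1 ω, R 0 ω)) μ →
        ((∫ ω, yr 1 (X ω) * r 0 (X ω) ∂μ) - ∫ ω, yr 0 (X ω) * r 1 (X ω) ∂μ)
            / (∫ ω, r 1 (X ω) * r 0 (X ω) ∂μ)
          = ∫ ω, τ (X ω) * ρ (X ω) ∂μ) :=
  rho_convex_weights_general μ Y R X hYmeas hRmeas hR01 hYint hle r yr τ ρ hr hyr hτ hdenpos hρ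
end

section
/- (Corollary 3.1(d).) If X is independent of (R(1),R(0)), and in addition either (i) (Y(1),Y(0)) is independent of (R(1),R(0)), or (ii) (Y(1),Y(0)) is conditionally independent of (R(1),R(0)) given X, then theta_drop = theta = E[Y(1) - Y(0)]. -/
open MeasureTheory ProbabilityTheory

/-!
Independence of `X` and `(R(1), R(0))` makes every conditional expectation of a function of
`(R(1), R(0))` given `X` a.e. constant. In particular `E[R(d) | X] = E[R(d)]`, and case (ii)
collapses to case (i): integrating `P(A ∩ B | X) = P(A | X) P(B | X) = P(A | X) P(B)` gives
`P(A ∩ B) = P(A) P(B)`. So `Y(d)` is independent of `R(d)`, both numerator terms of `θ_drop`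
factor as `E[Y(d)] E[R(1)] E[R(0)]`, the denominator is `E[R(1)] E[R(0)]`, and the ratio is
`E[Y(1)] - E[Y(0)]`.
-/

namespace ProbabilityTheory

variable {Ω : Type*} {mΩ : MeasurableSpace Ω} {μ : Measure Ω} [IsFiniteMeasure μ]

theorem CondIndep.indep_of_indep [StandardBorelSpace Ω] {m m₁ m₂ : MeasurableSpace Ω}
    {hm : m ≤ mΩ} (hm₁ : m₁ ≤ mΩ) (hm₂ : m₂ ≤ mΩ) (hcond : CondIndep m m₁ m₂ hm μ)
    (hind : Indep m₂ m μ) : Indep m₁ m₂ μ := by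
  refine (Indep_iff m₁ m₂ μ).2 fun s t hs ht => ?_
  have hs' := hm₁ s hs
  have ht' := hm₂ t ht
  have ht_const : μ⟦t | m⟧ =ᵐ[μ] fun _ => μ.real t := by
    refine (condExp_indep_eq hm₂ hm (stronglyMeasurable_const.indicator ht) hind).trans ?_
    simp only [integral_indicator ht', setIntegral_const, smul_eq_mul, mul_one]
    rfl
  have hreal : μ.real (s ∩ t) = μ.real s * μ.real t := calc
    μ.real (s ∩ t) = ∫ ω, (μ⟦s ∩ t | m⟧) ω ∂μ := by
      rw [integral_condExp hm, integral_indicator (hs'.inter ht'), setIntegral_const,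
        smul_eq_mul, mul_one]
    _ = ∫ ω, (μ⟦s | m⟧) ω * μ.real t ∂μ := by
      refine integral_congr_ae ?_
      filter_upwards [(condIndep_iff m m₁ m₂ hm hm₁ hm₂ μ).1 hcond s t hs ht, ht_const]
        with ω hst htω
      rw [hst, Pi.mul_apply, htω]
    _ = μ.real s * μ.real t := by
      rw [integral_mul_const, integral_condExp hm, integral_indicator hs', setIntegral_const,
        smul_eq_mul, mul_one]
  rw [measureReal_def, measureReal_def, measureReal_def, ← ENNReal.toReal_mul] at hreal
  exact (ENNReal.toReal_eq_toReal_iff' (by finiteness) (by finiteness)).1 hreal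

variable {β γ δ : Type*} [mβ : MeasurableSpace β] [mγ : MeasurableSpace γ] [mδ : MeasurableSpace δ]

theorem CondIndepFun.indepFun_of_indepFun [StandardBorelSpace Ω] {f : Ω → β} {g : Ω → γ}
    {Z : Ω → δ} {hZ : mδ.comap Z ≤ mΩ} (hf : Measurable f) (hg : Measurable g)
    (hcond : CondIndepFun (mδ.comap Z) hZ f g μ) (hind : IndepFun Z g μ) : IndepFun f g μ :=
  (IndepFun_iff_Indep f g μ).2 <|
    ((condIndepFun_iff_condIndep _ hZ f g μ).1 hcond).indep_of_indep hf.comap_le hg.comap_le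
      ((IndepFun_iff_Indep Z g μ).1 hind).symm

theorem condExp_comap_ae_eq_integral_of_indepFun {X : Ω → β} {f : Ω → ℝ} (hX : Measurable X)
    (hf : Measurable f) (hind : IndepFun X f μ) :
    μ[f | mβ.comap X] =ᵐ[μ] fun _ => ∫ ω, f ω ∂μ :=
  condExp_indep_eq hf.comap_le hX.comap_le (comap_measurable f).stronglyMeasurable
    ((IndepFun_iff_Indep X f μ).1 hind).symm

end ProbabilityTheory

theorem MeasureTheory.integral_mul_of_ae_eq_const {α : Type*} {_ : MeasurableSpace α}
    {μ : Measure α} {f g : α → ℝ} {c : ℝ} (hg : g =ᵐ[μ] fun _ => c) :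
    ∫ x, f x * g x ∂μ = (∫ x, f x ∂μ) * c := by
  rw [← integral_mul_const]
  exact integral_congr_ae (hg.mono fun x hx => by simp only [hx])

theorem corollary_3_1_d_general
    {Ω : Type*} [MeasurableSpace Ω] [StandardBorelSpace Ω] [Nonempty Ω]
    (μ : Measure Ω) [IsProbabilityMeasure μ]
    {k : ℕ} (Y : Fin 2 → Ω → ℝ) (R : Fin 2 → Ω → ℝ) (X : Ω → Fin k → ℝ)
    (hYmeas : ∀ d, Measurable (Y d)) (hRmeas : ∀ d, Measurable (R d))
    (hXmeas : Measurable X)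
    (hYint : ∀ d, Integrable (Y d) μ)
    (hle : MeasurableSpace.comap X inferInstance ≤ ‹MeasurableSpace Ω›)
    (r : Fin 2 → (Fin k → ℝ) → ℝ) (yr : Fin 2 → (Fin k → ℝ) → ℝ)
    (hr : ∀ d, μ[R d | MeasurableSpace.comap X inferInstance]
      =ᵐ[μ] fun ω => r d (X ω))
    (hyr : ∀ d, μ[fun ω => Y d ω * R d ω | MeasurableSpace.comap X inferInstance]
      =ᵐ[μ] fun ω => yr d (X ω))
    (hdenpos : 0 < ∫ ω, r 1 (X ω) * r 0 (X ω) ∂μ)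
    (hindepX : IndepFun X (fun ω => (R 1 ω, R 0 ω)) μ)
    (heither : IndepFun (fun ω => (Y 1 ω, Y 0 ω)) (fun ω => (R 1 ω, R 0 ω)) μ ∨
      CondIndepFun (MeasurableSpace.comap X inferInstance) hle
        (fun ω => (Y 1 ω, Y 0 ω)) (fun ω => (R 1 ω, R 0 ω)) μ) :
    ((∫ ω, yr 1 (X ω) * r 0 (X ω) ∂μ) - ∫ ω, yr 0 (X ω) * r 1 (X ω) ∂μ)
        / (∫ ω, r 1 (X ω) * r 0 (X ω) ∂μ)
      = ∫ ω, (Y 1 ω - Y 0 ω) ∂μ := by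
  have hYR : IndepFun (fun ω => (Y 1 ω, Y 0 ω)) (fun ω => (R 1 ω, R 0 ω)) μ :=
    heither.elim id fun h => h.indepFun_of_indepFun ((hYmeas 1).prodMk (hYmeas 0))
      ((hRmeas 1).prodMk (hRmeas 0)) hindepX
  have hXR : ∀ d, IndepFun X (R d) μ := Fin.forall_fin_two.2
    ⟨hindepX.comp measurable_id measurable_snd, hindepX.comp measurable_id measurable_fst⟩
  have hYR_d : ∀ d, IndepFun (Y d) (R d) μ := Fin.forall_fin_two.2
    ⟨hYR.comp measurable_snd measurable_snd, hYR.comp measurable_fst measurable_fst⟩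
  have hr_const : ∀ d, (fun ω => r d (X ω)) =ᵐ[μ] fun _ => ∫ ω, R d ω ∂μ := fun d =>
    (hr d).symm.trans (condExp_comap_ae_eq_integral_of_indepFun hXmeas (hRmeas d) (hXR d))
  have hnum : ∀ d d', ∫ ω, yr d (X ω) * r d' (X ω) ∂μ
      = (∫ ω, Y d ω ∂μ) * (∫ ω, R d ω ∂μ) * ∫ ω, R d' ω ∂μ := fun d d' => by
    rw [integral_mul_of_ae_eq_const (hr_const d'), ← integral_congr_ae (hyr d),
      integral_condExp hle, (hYR_d d).integral_fun_mul_eq_mul_integral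
        (hYmeas d).aestronglyMeasurable (hRmeas d).aestronglyMeasurable]
  have hden : ∫ ω, r 1 (X ω) * r 0 (X ω) ∂μ = (∫ ω, R 1 ω ∂μ) * ∫ ω, R 0 ω ∂μ := by
    rw [integral_mul_of_ae_eq_const (hr_const 0), integral_congr_ae (hr_const 1),
      integral_const, probReal_univ, one_smul]
  obtain ⟨hR1, hR0⟩ := mul_ne_zero_iff.1 (hden ▸ hdenpos).ne'
  rw [hnum, hnum, hden, integral_sub (hYint 1) (hYint 0)]
  field_simp

/-- Corollary 3.1(d): if `X` is independent of `(R(1), R(0))`, and in addition either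
(i) `(Y(1), Y(0))` is independent of `(R(1), R(0))`, or (ii) `(Y(1), Y(0))` is conditionally
independent of `(R(1), R(0))` given `X`, then `θ_drop = θ = E[Y(1) - Y(0)]`.
Here `r d` and `yr d` are versions of `E[R(d)|X=·]` and `E[Y(d)R(d)|X=·]`. -/
theorem corollary_3_1_d
    {Ω : Type*} [MeasurableSpace Ω] [StandardBorelSpace Ω] [Nonempty Ω]
    (μ : Measure Ω) [IsProbabilityMeasure μ]
    {k : ℕ} (Y : Fin 2 → Ω → ℝ) (R : Fin 2 → Ω → ℝ) (X : Ω → Fin k → ℝ)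
    (hYmeas : ∀ d, Measurable (Y d)) (hRmeas : ∀ d, Measurable (R d))
    (hXmeas : Measurable X)
    (hR01 : ∀ d ω, R d ω = 0 ∨ R d ω = 1)
    (hYint : ∀ d, Integrable (Y d) μ)
    (hRpos : ∀ d, 0 < ∫ ω, R d ω ∂μ)
    (hle : MeasurableSpace.comap X inferInstance ≤ ‹MeasurableSpace Ω›)
    (r : Fin 2 → (Fin k → ℝ) → ℝ) (yr : Fin 2 → (Fin k → ℝ) → ℝ)
    (hr : ∀ d, μ[R d | MeasurableSpace.comap X inferInstance]
      =ᵐ[μ] fun ω => r d (X ω))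
    (hyr : ∀ d, μ[fun ω => Y d ω * R d ω | MeasurableSpace.comap X inferInstance]
      =ᵐ[μ] fun ω => yr d (X ω))
    (hdenpos : 0 < ∫ ω, r 1 (X ω) * r 0 (X ω) ∂μ)
    (hindepX : IndepFun X (fun ω => (R 1 ω, R 0 ω)) μ)
    (heither : IndepFun (fun ω => (Y 1 ω, Y 0 ω)) (fun ω => (R 1 ω, R 0 ω)) μ ∨
      CondIndepFun (MeasurableSpace.comap X inferInstance) hle
        (fun ω => (Y 1 ω, Y 0 ω)) (fun ω => (R 1 ω, R 0 ω)) μ) :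
    ((∫ ω, yr 1 (X ω) * r 0 (X ω) ∂μ) - ∫ ω, yr 0 (X ω) * r 1 (X ω) ∂μ)
        / (∫ ω, r 1 (X ω) * r 0 (X ω) ∂μ)
      = ∫ ω, (Y 1 ω - Y 0 ω) ∂μ :=
  corollary_3_1_d_general μ Y R X hYmeas hRmeas hXmeas hYint hle r yr hr hyr hdenpos hindepX heither
end

section
/- (Remark 3.3, third claim.) If R(1) = R(0) = R almost surely, and (Y(1),Y(0)) is conditionally independent of (R(1),R(0)) given X, then theta_obs = E[tau(X) E[R|X]] / P(R=1) and theta_drop = E[tau(X) E[R|X]^2] / E[E[R|X]^2], where tau(x) = E[Y(1) - Y(0) | X = x]; that is, both estimands are convex weighted averages of conditional average treatment effects, with theta_obs weighting by the conditional non-attrition rate E[R|X] and theta_drop weighting by its square. -/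
open MeasureTheory ProbabilityTheory

section Aux
variable {Ω : Type*} {mΩ : MeasurableSpace Ω} {μ : Measure Ω} [IsProbabilityMeasure μ]

lemma aux_int_mul_bdd {f g : Ω → ℝ} (hf : Integrable f μ)
    (hg : AEStronglyMeasurable g μ) (hb : ∀ᵐ ω ∂μ, ‖g ω‖ ≤ 1) :
    Integrable (fun ω => f ω * g ω) μ :=
  (Integrable.bdd_mul hf hg hb).congr (ae_of_all _ fun _ => mul_comm _ _)

lemma aux_lipschitz {m' : MeasurableSpace Ω} (hm' : m' ≤ mΩ)
    {s : Set Ω} {w : Ω → ℝ}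
    (hw : AEStronglyMeasurable[mΩ] w μ) (hb : ∀ᵐ ω ∂μ, ‖w ω‖ ≤ 1) :
    LipschitzWith 1 (fun f : Ω →₁[μ.trim hm'] ℝ => ∫ ω in s, (f : Ω → ℝ) ω * w ω ∂μ) := by
  apply LipschitzWith.of_dist_le_mul
  intro f g
  have hfi : Integrable (f : Ω → ℝ) μ := integrable_of_integrable_trim hm' (L1.integrable_coeFn f)
  have hgi : Integrable (g : Ω → ℝ) μ := integrable_of_integrable_trim hm' (L1.integrable_coeFn g)
  have hfw : Integrable (fun ω => (f : Ω → ℝ) ω * w ω) μ := aux_int_mul_bdd hfi hw hb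
  have hgw : Integrable (fun ω => (g : Ω → ℝ) ω * w ω) μ := aux_int_mul_bdd hgi hw hb
  have hsub : Integrable (fun ω => (f : Ω → ℝ) ω - (g : Ω → ℝ) ω) μ := hfi.sub hgi
  rw [Real.dist_eq, NNReal.coe_one, one_mul, ← Real.norm_eq_abs]
  have step1 : ∫ ω in s, (f : Ω → ℝ) ω * w ω ∂μ - ∫ ω in s, (g : Ω → ℝ) ω * w ω ∂μ
      = ∫ ω in s, ((f : Ω → ℝ) ω * w ω - (g : Ω → ℝ) ω * w ω) ∂μ :=
    (integral_sub (hfw.restrict (s := s)) (hgw.restrict (s := s))).symm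
  rw [step1]
  have step2 : ‖∫ ω in s, ((f : Ω → ℝ) ω * w ω - (g : Ω → ℝ) ω * w ω) ∂μ‖
      ≤ ∫ ω in s, ‖(f : Ω → ℝ) ω * w ω - (g : Ω → ℝ) ω * w ω‖ ∂μ :=
    norm_integral_le_integral_norm _
  have step3 : ∫ ω in s, ‖(f : Ω → ℝ) ω * w ω - (g : Ω → ℝ) ω * w ω‖ ∂μ
      ≤ ∫ ω in s, ‖(f : Ω → ℝ) ω - (g : Ω → ℝ) ω‖ ∂μ := by
    refine integral_mono_of_nonneg (ae_of_all _ fun ω => norm_nonneg _)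
      (hsub.norm.restrict (s := s)) ?_
    filter_upwards [ae_restrict_of_ae hb] with ω hω
    have : (f : Ω → ℝ) ω * w ω - (g : Ω → ℝ) ω * w ω
        = ((f : Ω → ℝ) ω - (g : Ω → ℝ) ω) * w ω := by ring
    rw [this, norm_mul]
    exact mul_le_of_le_one_right (norm_nonneg _) hω
  have step4 : ∫ ω in s, ‖(f : Ω → ℝ) ω - (g : Ω → ℝ) ω‖ ∂μ
      ≤ ∫ ω, ‖(f : Ω → ℝ) ω - (g : Ω → ℝ) ω‖ ∂μ :=
    integral_mono_measure Measure.restrict_le_self (ae_of_all _ fun ω => norm_nonneg _)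
      hsub.norm
  have step5 : ∫ ω, ‖(f : Ω → ℝ) ω - (g : Ω → ℝ) ω‖ ∂μ = dist f g := by
    rw [dist_eq_norm, L1.norm_eq_integral_norm]
    rw [← integral_trim_ae hm' (L1.integrable_coeFn (f - g)).aestronglyMeasurable.norm]
    refine integral_congr_ae ?_
    filter_upwards [ae_eq_of_ae_eq_trim (Lp.coeFn_sub f g)] with ω hω
    rw [hω, Pi.sub_apply]
  calc ‖∫ ω in s, ((f : Ω → ℝ) ω * w ω - (g : Ω → ℝ) ω * w ω) ∂μ‖
      ≤ ∫ ω in s, ‖(f : Ω → ℝ) ω * w ω - (g : Ω → ℝ) ω * w ω‖ ∂μ := step2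
    _ ≤ ∫ ω in s, ‖(f : Ω → ℝ) ω - (g : Ω → ℝ) ω‖ ∂μ := step3
    _ ≤ ∫ ω, ‖(f : Ω → ℝ) ω - (g : Ω → ℝ) ω‖ ∂μ := step4
    _ = dist f g := step5

variable [StandardBorelSpace Ω] {δ : Type*} {mδ : MeasurableSpace δ} {X : Ω → δ}
  (hle : MeasurableSpace.comap X mδ ≤ mΩ)

lemma aux_setIntegral_indicator_eq
    {β γ : Type*} {mβ : MeasurableSpace β} {mγ : MeasurableSpace γ}
    {F : Ω → β} {G : Ω → γ} (hF : Measurable F) (hG : Measurable G)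
    (hCI : CondIndepFun (MeasurableSpace.comap X mδ) hle F G μ)
    {t : Set γ} (ht : MeasurableSet t)
    {s : Set Ω} (hs : MeasurableSet[MeasurableSpace.comap X mδ] s)
    {Z : Ω → ℝ} (hZm : Measurable[MeasurableSpace.comap F mβ] Z) (hZint : Integrable Z μ) :
    ∫ ω in s, Z ω * (G ⁻¹' t).indicator (fun _ => (1:ℝ)) ω ∂μ
      = ∫ ω in s, (μ[(G ⁻¹' t).indicator (fun _ => (1:ℝ))|MeasurableSpace.comap X mδ]) ω * Z ω ∂μ := by
  have hm : MeasurableSpace.comap X mδ ≤ mΩ := hle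
  have hFle : MeasurableSpace.comap F mβ ≤ mΩ := hF.comap_le
  set A : Set Ω := G ⁻¹' t with hAdef
  have hA : MeasurableSet A := hG ht
  set q : Ω → ℝ := μ[A.indicator (fun _ => (1:ℝ))|MeasurableSpace.comap X mδ] with hqdef
  have hq_sm : StronglyMeasurable[MeasurableSpace.comap X mδ] q := stronglyMeasurable_condExp
  have hq_meas : AEStronglyMeasurable q μ := (hq_sm.mono hm).aestronglyMeasurable
  have hq_int : Integrable q μ := integrable_condExp
  have hind_bd : ∀ ω, ‖A.indicator (fun _ => (1:ℝ)) ω‖ ≤ 1 := by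
    intro ω
    by_cases h : ω ∈ A <;> simp [Set.indicator_apply, h]
  have hq_bd : ∀ᵐ ω ∂μ, ‖q ω‖ ≤ 1 := by
    have h0 : (0 : Ω → ℝ) ≤ᵐ[μ] q :=
      condExp_nonneg (ae_of_all _ fun ω => Set.indicator_nonneg (fun _ _ => zero_le_one) ω)
    have h1 : q ≤ᵐ[μ] μ[(fun _ => (1:ℝ))|MeasurableSpace.comap X mδ] := by
      refine condExp_mono ((integrable_const 1).indicator hA) (integrable_const 1)
        (ae_of_all _ fun ω => ?_)
      by_cases h : ω ∈ A <;> simp [Set.indicator_apply, h]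
    rw [condExp_const hm] at h1
    filter_upwards [h0, h1] with ω h0 h1
    rw [Real.norm_eq_abs, abs_le]
    have h0' : (0:ℝ) ≤ q ω := by simpa using h0
    exact ⟨by linarith, h1⟩
  have hind_meas : AEStronglyMeasurable (A.indicator (fun _ => (1:ℝ))) μ :=
    (stronglyMeasurable_const.indicator hA).aestronglyMeasurable
  -- integrability helpers
  have hmulind : ∀ {W : Ω → ℝ}, Integrable W μ →
      Integrable (fun ω => W ω * A.indicator (fun _ => (1:ℝ)) ω) μ :=
    fun hW => aux_int_mul_bdd hW hind_meas (ae_of_all _ hind_bd)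
  have hmulq : ∀ {W : Ω → ℝ}, Integrable W μ → Integrable (fun ω => q ω * W ω) μ :=
    fun hW => Integrable.bdd_mul hW hq_meas hq_bd
  haveI : SigmaFinite (μ.trim hm) := by
    have : IsFiniteMeasure (μ.trim hm) := isFiniteMeasure_trim hm
    infer_instance
  -- the induction
  have main : ∀ ⦃W : Ω → ℝ⦄, Integrable W (μ.trim hFle) →
      ∫ ω in s, W ω * A.indicator (fun _ => (1:ℝ)) ω ∂μ = ∫ ω in s, q ω * W ω ∂μ := by
    refine @Integrable.induction Ω ℝ (MeasurableSpace.comap F mβ) _ (μ.trim hFle)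
      (fun W => ∫ ω in s, W ω * A.indicator (fun _ => (1:ℝ)) ω ∂μ
        = ∫ ω in s, q ω * W ω ∂μ) ?_ ?_ ?_ ?_
    · -- indicators
      rintro c u hu -
      obtain ⟨t', ht', rfl⟩ := hu
      have hu' : MeasurableSet (F ⁻¹' t') := hF ht'
      have hkey : μ⟦F ⁻¹' t' ∩ A|MeasurableSpace.comap X mδ⟧ =ᵐ[μ] fun ω => (μ⟦F ⁻¹' t'|MeasurableSpace.comap X mδ⟧) ω * q ω :=
        ((condIndepFun_iff_condExp_inter_preimage_eq_mul hF hG).mp hCI) t' t ht' ht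
      have hints : Integrable ((F ⁻¹' t' ∩ A).indicator fun _ => c) μ :=
        (integrable_const c).indicator (hu'.inter hA)
      have hsmul1 : ((F ⁻¹' t' ∩ A).indicator fun _ => c)
          = c • ((F ⁻¹' t' ∩ A).indicator fun _ => (1:ℝ)) := by
        funext ω; by_cases h : ω ∈ F ⁻¹' t' ∩ A <;> simp [Set.indicator_apply, h]
      have hsmul2 : ((F ⁻¹' t').indicator fun _ => c)
          = c • ((F ⁻¹' t').indicator fun _ => (1:ℝ)) := by
        funext ω; by_cases h : ω ∈ F ⁻¹' t' <;> simp [Set.indicator_apply, h]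
      have lhs_eq : ∫ ω in s, (F ⁻¹' t').indicator (fun _ => c) ω * A.indicator (fun _ => (1:ℝ)) ω ∂μ
          = ∫ ω in s, c * ((μ⟦F ⁻¹' t'|MeasurableSpace.comap X mδ⟧) ω * q ω) ∂μ := by
        have e1 : ∀ ω, (F ⁻¹' t').indicator (fun _ => c) ω * A.indicator (fun _ => (1:ℝ)) ω
            = (F ⁻¹' t' ∩ A).indicator (fun _ => c) ω := by
          intro ω
          by_cases h1 : ω ∈ F ⁻¹' t' <;> by_cases h2 : ω ∈ A <;>
            simp [Set.indicator_apply, h1, h2, Set.mem_inter_iff]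
        rw [integral_congr_ae (ae_restrict_of_ae (ae_of_all _ e1)),
          ← setIntegral_condExp hm hints hs]
        refine setIntegral_congr_ae (hm s hs) ?_
        have hce : μ[(F ⁻¹' t' ∩ A).indicator (fun _ => c)|MeasurableSpace.comap X mδ]
            =ᵐ[μ] c • μ⟦F ⁻¹' t' ∩ A|MeasurableSpace.comap X mδ⟧ := by
          rw [hsmul1]; exact condExp_smul c _ _
        filter_upwards [hce, hkey] with ω h1 h2 _
        rw [h1, Pi.smul_apply, smul_eq_mul, h2]
      have rhs_eq : ∫ ω in s, q ω * (F ⁻¹' t').indicator (fun _ => c) ω ∂μ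
          = ∫ ω in s, c * ((μ⟦F ⁻¹' t'|MeasurableSpace.comap X mδ⟧) ω * q ω) ∂μ := by
        have hqZ : Integrable (fun ω => q ω * (F ⁻¹' t').indicator (fun _ => c) ω) μ :=
          hmulq ((integrable_const c).indicator hu')
        have hpull : μ[fun ω => q ω * (F ⁻¹' t').indicator (fun _ => c) ω|MeasurableSpace.comap X mδ]
            =ᵐ[μ] fun ω => q ω * (μ[(F ⁻¹' t').indicator (fun _ => c)|MeasurableSpace.comap X mδ]) ω := by
          have := condExp_mul_of_stronglyMeasurable_left (μ := μ) (m := MeasurableSpace.comap X mδ) hq_sm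
            (g := (F ⁻¹' t').indicator (fun _ => c)) hqZ ((integrable_const c).indicator hu')
          exact this
        rw [← setIntegral_condExp hm hqZ hs]
        refine setIntegral_congr_ae (hm s hs) ?_
        have hce : μ[(F ⁻¹' t').indicator (fun _ => c)|MeasurableSpace.comap X mδ]
            =ᵐ[μ] c • μ⟦F ⁻¹' t'|MeasurableSpace.comap X mδ⟧ := by
          rw [hsmul2]; exact condExp_smul c _ _
        filter_upwards [hpull, hce] with ω h1 h2 _
        rw [h1, h2, Pi.smul_apply, smul_eq_mul]; ring
      rw [lhs_eq, rhs_eq]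
    · -- additivity
      rintro W₁ W₂ - h1 h2 hP1 hP2
      have h1' : Integrable W₁ μ := integrable_of_integrable_trim hFle h1
      have h2' : Integrable W₂ μ := integrable_of_integrable_trim hFle h2
      have e : ∀ ω, (W₁ + W₂) ω * A.indicator (fun _ => (1:ℝ)) ω
          = W₁ ω * A.indicator (fun _ => (1:ℝ)) ω + W₂ ω * A.indicator (fun _ => (1:ℝ)) ω := by
        intro ω; simp [add_mul]
      have e' : ∀ ω, q ω * (W₁ + W₂) ω = q ω * W₁ ω + q ω * W₂ ω := by
        intro ω; simp [mul_add]
      rw [integral_congr_ae (ae_restrict_of_ae (ae_of_all _ e)),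
        integral_congr_ae (ae_restrict_of_ae (ae_of_all _ e')),
        integral_add ((hmulind h1').restrict (s := s)) ((hmulind h2').restrict (s := s)),
        integral_add ((hmulq h1').restrict (s := s)) ((hmulq h2').restrict (s := s)),
        hP1, hP2]
    · -- closedness
      have c1 : Continuous (fun f : Ω →₁[μ.trim hFle] ℝ =>
          ∫ ω in s, (f : Ω → ℝ) ω * A.indicator (fun _ => (1:ℝ)) ω ∂μ) :=
        (aux_lipschitz hFle hind_meas (ae_of_all _ hind_bd)).continuous
      have c2 : Continuous (fun f : Ω →₁[μ.trim hFle] ℝ =>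
          ∫ ω in s, q ω * (f : Ω → ℝ) ω ∂μ) := by
        have heq : (fun f : Ω →₁[μ.trim hFle] ℝ => ∫ ω in s, q ω * (f : Ω → ℝ) ω ∂μ)
            = fun f : Ω →₁[μ.trim hFle] ℝ => ∫ ω in s, (f : Ω → ℝ) ω * q ω ∂μ := by
          funext f
          exact integral_congr_ae (ae_of_all _ fun ω => mul_comm _ _)
        rw [heq]
        exact (aux_lipschitz hFle hq_meas hq_bd).continuous
      exact isClosed_eq c1 c2
    · -- ae congruence
      rintro W₁ W₂ hW hint h
      have hWμ : W₁ =ᵐ[μ] W₂ := ae_eq_of_ae_eq_trim hW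
      have e1 : (fun ω => W₁ ω * A.indicator (fun _ => (1:ℝ)) ω)
          =ᵐ[μ] fun ω => W₂ ω * A.indicator (fun _ => (1:ℝ)) ω := by
        filter_upwards [hWμ] with ω hω; rw [hω]
      have e2 : (fun ω => q ω * W₁ ω) =ᵐ[μ] fun ω => q ω * W₂ ω := by
        filter_upwards [hWμ] with ω hω; rw [hω]
      rw [← integral_congr_ae (ae_restrict_of_ae e1), ← integral_congr_ae (ae_restrict_of_ae e2)]
      exact h
  exact main (hZint.trim hFle hZm.stronglyMeasurable)

end Aux

section Aux2
variable {Ω : Type*} {mΩ : MeasurableSpace Ω} {μ : Measure Ω} [IsProbabilityMeasure μ]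
variable [StandardBorelSpace Ω] {δ : Type*} {mδ : MeasurableSpace δ} {X : Ω → δ}
  (hle : MeasurableSpace.comap X mδ ≤ mΩ)

lemma condexp_mul_of_condIndepFun'
    {β γ : Type*} {mβ : MeasurableSpace β} {mγ : MeasurableSpace γ}
    {F : Ω → β} {G : Ω → γ} (hF : Measurable F) (hG : Measurable G)
    (hCI : CondIndepFun (MeasurableSpace.comap X mδ) hle F G μ)
    (prY : β → ℝ) (prR : γ → ℝ) (hprY : Measurable prY) (hprR : Measurable prR)
    (hYint : Integrable (fun ω => prY (F ω)) μ)
    (hR01 : ∀ ω, prR (G ω) = 0 ∨ prR (G ω) = 1) :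
    μ[fun ω => prY (F ω) * prR (G ω)|MeasurableSpace.comap X mδ]
      =ᵐ[μ] fun ω => (μ[fun ω' => prY (F ω')|MeasurableSpace.comap X mδ]) ω
        * (μ[fun ω' => prR (G ω')|MeasurableSpace.comap X mδ]) ω := by
  have hm : MeasurableSpace.comap X mδ ≤ mΩ := hle
  haveI : SigmaFinite (μ.trim hm) := by
    have : IsFiniteMeasure (μ.trim hm) := isFiniteMeasure_trim hm
    infer_instance
  set A : Set Ω := G ⁻¹' (prR ⁻¹' {1}) with hAdef
  have hA : MeasurableSet A := hG (hprR (measurableSet_singleton 1))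
  have hRind : (fun ω => prR (G ω)) = A.indicator (fun _ => (1:ℝ)) := by
    funext ω
    rcases hR01 ω with h | h
    · have : ω ∉ A := by
        simp only [hAdef, Set.mem_preimage, Set.mem_singleton_iff, h]
        norm_num
      simp [Set.indicator_apply, this, h]
    · have : ω ∈ A := by
        simp [hAdef, Set.mem_preimage, Set.mem_singleton_iff, h]
      simp [Set.indicator_apply, this, h]
  set Yf : Ω → ℝ := fun ω => prY (F ω) with hYdef
  have hYm : Measurable[MeasurableSpace.comap F mβ] Yf := by
    have hFcm : Measurable[MeasurableSpace.comap F mβ] F := fun u hu => ⟨u, hu, rfl⟩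
    exact hprY.comp hFcm
  set q : Ω → ℝ := μ[fun ω' => prR (G ω')|MeasurableSpace.comap X mδ] with hqdef
  have hq_sm : StronglyMeasurable[MeasurableSpace.comap X mδ] q := stronglyMeasurable_condExp
  have hq_meas : AEStronglyMeasurable q μ := (hq_sm.mono hm).aestronglyMeasurable
  have hq_bd : ∀ᵐ ω ∂μ, ‖q ω‖ ≤ 1 := by
    have h0 : (0 : Ω → ℝ) ≤ᵐ[μ] q := by
      refine condExp_nonneg (ae_of_all _ fun ω => ?_)
      rcases hR01 ω with h | h <;> simp [h]
    have hRintble : Integrable (fun ω => prR (G ω)) μ := by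
      rw [hRind]; exact (integrable_const 1).indicator hA
    have h1 : q ≤ᵐ[μ] μ[(fun _ => (1:ℝ))|MeasurableSpace.comap X mδ] := by
      refine condExp_mono hRintble (integrable_const 1) (ae_of_all _ fun ω => ?_)
      rcases hR01 ω with h | h <;> simp [h]
    rw [condExp_const hm] at h1
    filter_upwards [h0, h1] with ω h0 h1
    rw [Real.norm_eq_abs, abs_le]
    have h0' : (0:ℝ) ≤ q ω := by simpa using h0
    exact ⟨by linarith, h1⟩
  have hRind' : ∀ ω, prR (G ω) = A.indicator (fun _ => (1:ℝ)) ω := fun ω => congrFun hRind ω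
  have hf : Integrable (fun ω => Yf ω * prR (G ω)) μ := by
    simp only [hRind']
    refine aux_int_mul_bdd hYint (stronglyMeasurable_const.indicator hA).aestronglyMeasurable
      (ae_of_all _ fun ω => ?_)
    by_cases h : ω ∈ A <;> simp [Set.indicator_apply, h]
  have hg_int : Integrable (fun ω => (μ[Yf|MeasurableSpace.comap X mδ]) ω * q ω) μ :=
    aux_int_mul_bdd integrable_condExp hq_meas hq_bd
  symm
  have hq_eq : q = μ[A.indicator (fun _ => (1:ℝ))|MeasurableSpace.comap X mδ] := by
    rw [hqdef, hRind]
  refine ae_eq_condExp_of_forall_setIntegral_eq hm hf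
    (fun s _ _ => hg_int.integrableOn) (fun s hs _ => ?_)
    (StronglyMeasurable.aestronglyMeasurable
      (stronglyMeasurable_condExp.mul stronglyMeasurable_condExp))
  have hqY : Integrable (fun ω => q ω * Yf ω) μ := Integrable.bdd_mul hYint hq_meas hq_bd
  have hpull : μ[fun ω => q ω * Yf ω|MeasurableSpace.comap X mδ]
      =ᵐ[μ] fun ω => q ω * (μ[Yf|MeasurableSpace.comap X mδ]) ω :=
    condExp_mul_of_stronglyMeasurable_left hq_sm hqY hYint
  calc ∫ ω in s, (μ[Yf|MeasurableSpace.comap X mδ]) ω * q ω ∂μ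
      = ∫ ω in s, (μ[fun ω' => q ω' * Yf ω'|MeasurableSpace.comap X mδ]) ω ∂μ := by
        refine setIntegral_congr_ae (hm s hs) ?_
        filter_upwards [hpull] with ω h _
        rw [h]; ring
    _ = ∫ ω in s, q ω * Yf ω ∂μ := setIntegral_condExp hm hqY hs
    _ = ∫ ω in s, Yf ω * A.indicator (fun _ => (1:ℝ)) ω ∂μ := by
        rw [hq_eq]
        exact (aux_setIntegral_indicator_eq hle hF hG hCI
          (hprR (measurableSet_singleton 1)) hs hYm hYint).symm
    _ = ∫ ω in s, Yf ω * prR (G ω) ∂μ := by simp only [hRind']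
end Aux2

/-- Remark 3.3, third claim: if `R(1) = R(0) = R` almost surely and `(Y(1), Y(0))` is
conditionally independent of `(R(1), R(0))` given `X`, then
`θ_obs = E[τ(X) E[R|X]] / P(R = 1)` and `θ_drop = E[τ(X) E[R|X]²] / E[E[R|X]²]`,
where `τ(x) = E[Y(1) - Y(0) | X = x]`. Here `r d`, `yr d`, `rbar` and `τ` are versions of
the conditional expectations `E[R(d)|X=·]`, `E[Y(d)R(d)|X=·]`, `E[R|X=·]`, `E[Y(1)-Y(0)|X=·]`. -/
theorem remark_3_3_third_claim
    {Ω : Type*} [MeasurableSpace Ω] [StandardBorelSpace Ω] [Nonempty Ω]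
    (μ : Measure Ω) [IsProbabilityMeasure μ]
    {k : ℕ} (Y : Fin 2 → Ω → ℝ) (R : Fin 2 → Ω → ℝ) (X : Ω → Fin k → ℝ)
    (R' : Ω → ℝ)
    (hYmeas : ∀ d, Measurable (Y d)) (hRmeas : ∀ d, Measurable (R d))
    (hXmeas : Measurable X) (hR'meas : Measurable R')
    (hR01 : ∀ d ω, R d ω = 0 ∨ R d ω = 1)
    (hYint : ∀ d, Integrable (Y d) μ)
    (hRpos : ∀ d, 0 < ∫ ω, R d ω ∂μ)
    (hRR' : ∀ᵐ ω ∂μ, R 1 ω = R' ω ∧ R 0 ω = R' ω)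
    (hle : MeasurableSpace.comap X inferInstance ≤ ‹MeasurableSpace Ω›)
    (r : Fin 2 → (Fin k → ℝ) → ℝ) (yr : Fin 2 → (Fin k → ℝ) → ℝ)
    (rbar : (Fin k → ℝ) → ℝ) (τ : (Fin k → ℝ) → ℝ)
    (hr : ∀ d, μ[R d | MeasurableSpace.comap X inferInstance]
      =ᵐ[μ] fun ω => r d (X ω))
    (hyr : ∀ d, μ[fun ω => Y d ω * R d ω | MeasurableSpace.comap X inferInstance]
      =ᵐ[μ] fun ω => yr d (X ω))
    (hrbar : μ[R' | MeasurableSpace.comap X inferInstance]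
      =ᵐ[μ] fun ω => rbar (X ω))
    (hτ : μ[fun ω => Y 1 ω - Y 0 ω | MeasurableSpace.comap X inferInstance]
      =ᵐ[μ] fun ω => τ (X ω))
    (hdenpos : 0 < ∫ ω, r 1 (X ω) * r 0 (X ω) ∂μ)
    (hCI : CondIndepFun (MeasurableSpace.comap X inferInstance) hle
      (fun ω => (Y 1 ω, Y 0 ω)) (fun ω => (R 1 ω, R 0 ω)) μ) :
    ((∫ ω, R 1 ω * Y 1 ω ∂μ) / (∫ ω, R 1 ω ∂μ)
        - (∫ ω, R 0 ω * Y 0 ω ∂μ) / (∫ ω, R 0 ω ∂μ)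
      = (∫ ω, τ (X ω) * rbar (X ω) ∂μ) / (μ {ω | R' ω = 1}).toReal) ∧
    (((∫ ω, yr 1 (X ω) * r 0 (X ω) ∂μ) - ∫ ω, yr 0 (X ω) * r 1 (X ω) ∂μ)
        / (∫ ω, r 1 (X ω) * r 0 (X ω) ∂μ)
      = (∫ ω, τ (X ω) * (rbar (X ω)) ^ 2 ∂μ) / ∫ ω, (rbar (X ω)) ^ 2 ∂μ) := by
  have hm : MeasurableSpace.comap X inferInstance ≤ ‹MeasurableSpace Ω› := hle
  haveI : SigmaFinite (μ.trim hm) := by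
    have : IsFiniteMeasure (μ.trim hm) := isFiniteMeasure_trim hm
    infer_instance
  -- basic integrability
  have hRbd : ∀ d, ∀ ω, ‖R d ω‖ ≤ 1 := by
    intro d ω; rcases hR01 d ω with h | h <;> simp [h]
  have hRint : ∀ d, Integrable (R d) μ := fun d =>
    Integrable.mono' (integrable_const 1) (hRmeas d).aestronglyMeasurable
      (ae_of_all _ (hRbd d))
  have hYRint : ∀ d, Integrable (fun ω => Y d ω * R d ω) μ := fun d =>
    aux_int_mul_bdd (hYint d) (hRmeas d).aestronglyMeasurable (ae_of_all _ (hRbd d))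
  -- product rule from conditional independence
  have hFmeas : Measurable (fun ω => (Y 1 ω, Y 0 ω)) := (hYmeas 1).prodMk (hYmeas 0)
  have hGmeas : Measurable (fun ω => (R 1 ω, R 0 ω)) := (hRmeas 1).prodMk (hRmeas 0)
  have hprod : ∀ d, μ[fun ω => Y d ω * R d ω|MeasurableSpace.comap X inferInstance]
      =ᵐ[μ] fun ω => (μ[Y d|MeasurableSpace.comap X inferInstance]) ω
        * (μ[R d|MeasurableSpace.comap X inferInstance]) ω := by
    intro d
    fin_cases d
    · exact condexp_mul_of_condIndepFun' hle hFmeas hGmeas hCI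
        (fun p => p.2) (fun p => p.2) measurable_snd measurable_snd (hYint 0) (hR01 0)
    · exact condexp_mul_of_condIndepFun' hle hFmeas hGmeas hCI
        (fun p => p.1) (fun p => p.1) measurable_fst measurable_fst (hYint 1) (hR01 1)
  -- R d is a.e. R'
  have hRae : ∀ d, R d =ᵐ[μ] R' := by
    intro d
    fin_cases d
    · exact hRR'.mono fun ω h => h.2
    · exact hRR'.mono fun ω h => h.1
  have hrbar' : ∀ d, μ[R d|MeasurableSpace.comap X inferInstance]
      =ᵐ[μ] fun ω => rbar (X ω) := fun d =>
    (condExp_congr_ae (hRae d)).trans hrbar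
  -- bounds on rbar ∘ X
  have hR'01 : ∀ᵐ ω ∂μ, 0 ≤ R' ω ∧ R' ω ≤ 1 := by
    filter_upwards [hRae 1] with ω h
    rcases hR01 1 ω with h0 | h0 <;> rw [← h, h0] <;> norm_num
  have hR'int : Integrable R' μ :=
    Integrable.mono' (integrable_const 1) hR'meas.aestronglyMeasurable
      (hR'01.mono fun ω h => by rw [Real.norm_eq_abs, abs_le]; exact ⟨by linarith [h.1], h.2⟩)
  have hrb_bd : ∀ᵐ ω ∂μ, ‖rbar (X ω)‖ ≤ 1 := by
    have h0 : (0 : Ω → ℝ) ≤ᵐ[μ] μ[R'|MeasurableSpace.comap X inferInstance] :=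
      condExp_nonneg (hR'01.mono fun ω h => h.1)
    have h1 : μ[R'|MeasurableSpace.comap X inferInstance]
        ≤ᵐ[μ] μ[(fun _ => (1:ℝ))|MeasurableSpace.comap X inferInstance] :=
      condExp_mono hR'int (integrable_const 1) (hR'01.mono fun ω h => h.2)
    rw [condExp_const hm] at h1
    filter_upwards [h0, h1, hrbar] with ω h0 h1 h2
    rw [← h2, Real.norm_eq_abs, abs_le]
    have h0' : (0:ℝ) ≤ (μ[R'|MeasurableSpace.comap X inferInstance]) ω := by simpa using h0
    exact ⟨by linarith, h1⟩
  have hrb_meas : AEStronglyMeasurable (fun ω => rbar (X ω)) μ :=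
    ((stronglyMeasurable_condExp.mono hm).aestronglyMeasurable).congr hrbar
  have hrb2_meas : AEStronglyMeasurable (fun ω => rbar (X ω) ^ 2) μ := by
    have := hrb_meas.mul hrb_meas
    exact hrb_meas.pow 2
  have hrb2_bd : ∀ᵐ ω ∂μ, ‖rbar (X ω) ^ 2‖ ≤ 1 := by
    filter_upwards [hrb_bd] with ω h
    rw [sq, norm_mul]
    exact mul_le_one₀ h (norm_nonneg _) h
  -- integrability of products with condexps
  have hI1 : ∀ d, Integrable
      (fun ω => (μ[Y d|MeasurableSpace.comap X inferInstance]) ω * rbar (X ω)) μ := fun d =>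
    aux_int_mul_bdd integrable_condExp hrb_meas hrb_bd
  have hI2 : ∀ d, Integrable
      (fun ω => (μ[Y d|MeasurableSpace.comap X inferInstance]) ω * rbar (X ω) ^ 2) μ := fun d =>
    aux_int_mul_bdd integrable_condExp hrb2_meas hrb2_bd
  have hsubce : μ[fun ω => Y 1 ω - Y 0 ω|MeasurableSpace.comap X inferInstance]
      =ᵐ[μ] fun ω => (μ[Y 1|MeasurableSpace.comap X inferInstance]) ω
        - (μ[Y 0|MeasurableSpace.comap X inferInstance]) ω :=
    condExp_sub (hYint 1) (hYint 0) _
  have hτ' : (fun ω => τ (X ω)) =ᵐ[μ] fun ω => (μ[Y 1|MeasurableSpace.comap X inferInstance]) ω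
      - (μ[Y 0|MeasurableSpace.comap X inferInstance]) ω := hτ.symm.trans hsubce
  -- first claim numerator
  have step : ∀ d, ∫ ω, Y d ω * R d ω ∂μ
      = ∫ ω, (μ[Y d|MeasurableSpace.comap X inferInstance]) ω * rbar (X ω) ∂μ := by
    intro d
    have h0 : ∫ ω, (μ[fun ω' => Y d ω' * R d ω'|MeasurableSpace.comap X inferInstance]) ω ∂μ
        = ∫ ω, Y d ω * R d ω ∂μ := integral_condExp hm
    rw [← h0]
    refine integral_congr_ae ?_
    filter_upwards [hprod d, hrbar' d] with ω h1 h2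
    rw [h1, h2]
  have num1 : ∫ ω, R 1 ω * Y 1 ω ∂μ - ∫ ω, R 0 ω * Y 0 ω ∂μ
      = ∫ ω, τ (X ω) * rbar (X ω) ∂μ := by
    have e : ∀ d, ∫ ω, R d ω * Y d ω ∂μ = ∫ ω, Y d ω * R d ω ∂μ := fun d =>
      integral_congr_ae (ae_of_all _ fun ω => mul_comm _ _)
    rw [e 1, e 0, step 1, step 0, ← integral_sub (hI1 1) (hI1 0)]
    refine integral_congr_ae ?_
    filter_upwards [hτ'] with ω h
    rw [h]; ring
  -- denominator
  have hA1 : MeasurableSet {ω | R 1 ω = 1} := by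
    have : {ω | R 1 ω = 1} = R 1 ⁻¹' {1} := by ext ω; simp
    rw [this]; exact (hRmeas 1) (measurableSet_singleton 1)
  have hden : ∀ d, ∫ ω, R d ω ∂μ = (μ {ω | R' ω = 1}).toReal := by
    intro d
    have e1 : ∫ ω, R d ω ∂μ = ∫ ω, R 1 ω ∂μ :=
      integral_congr_ae ((hRae d).trans (hRae 1).symm)
    have e2 : R 1 = Set.indicator {ω | R 1 ω = 1} (fun _ => (1:ℝ)) := by
      funext ω
      rcases hR01 1 ω with h | h
      · have : ω ∉ {ω | R 1 ω = 1} := by simp [Set.mem_setOf_eq, h]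
        simp [Set.indicator_apply, this, h]
      · have : ω ∈ {ω | R 1 ω = 1} := by simp [Set.mem_setOf_eq, h]
        simp [Set.indicator_apply, this, h]
    have e3 : μ {ω | R 1 ω = 1} = μ {ω | R' ω = 1} := by
      refine measure_congr (Filter.eventuallyEq_set.mpr ?_)
      filter_upwards [hRae 1] with ω h
      simp [Set.mem_setOf_eq, h]
    rw [e1, e2, integral_indicator_const (1:ℝ) hA1, smul_eq_mul, mul_one, measureReal_def, e3]
  constructor
  · rw [hden 1, hden 0, div_sub_div_same, num1]
  · -- second claim
    have eyr : ∀ d, (fun ω => yr d (X ω))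
        =ᵐ[μ] fun ω => (μ[Y d|MeasurableSpace.comap X inferInstance]) ω * rbar (X ω) := by
      intro d
      refine (hyr d).symm.trans ((hprod d).trans ?_)
      filter_upwards [hrbar' d] with ω h
      rw [h]
    have er : ∀ d, (fun ω => r d (X ω)) =ᵐ[μ] fun ω => rbar (X ω) := fun d =>
      (hr d).symm.trans (hrbar' d)
    have num2 : ∫ ω, yr 1 (X ω) * r 0 (X ω) ∂μ - ∫ ω, yr 0 (X ω) * r 1 (X ω) ∂μ
        = ∫ ω, τ (X ω) * rbar (X ω) ^ 2 ∂μ := by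
      have e1 : ∫ ω, yr 1 (X ω) * r 0 (X ω) ∂μ
          = ∫ ω, (μ[Y 1|MeasurableSpace.comap X inferInstance]) ω * rbar (X ω) ^ 2 ∂μ := by
        refine integral_congr_ae ?_
        filter_upwards [eyr 1, er 0] with ω h1 h2
        rw [h1, h2]; ring
      have e0 : ∫ ω, yr 0 (X ω) * r 1 (X ω) ∂μ
          = ∫ ω, (μ[Y 0|MeasurableSpace.comap X inferInstance]) ω * rbar (X ω) ^ 2 ∂μ := by
        refine integral_congr_ae ?_
        filter_upwards [eyr 0, er 1] with ω h1 h2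
        rw [h1, h2]; ring
      rw [e1, e0, ← integral_sub (hI2 1) (hI2 0)]
      refine integral_congr_ae ?_
      filter_upwards [hτ'] with ω h
      rw [h]; ring
    have den2 : ∫ ω, r 1 (X ω) * r 0 (X ω) ∂μ = ∫ ω, rbar (X ω) ^ 2 ∂μ := by
      refine integral_congr_ae ?_
      filter_upwards [er 1, er 0] with ω h1 h2
      rw [h1, h2]; ring
    rw [num2, den2]
end

section
/- (Corollary 3.2(b).) If (Y(1),Y(0)) is conditionally independent of (R(1),R(0)) given S, then theta_sfe = E[tau(S) lambda(S)], where tau(s) = E[Y(1) - Y(0) | S = s] and lambda(s) = Lambda^{-1} E[R(1)|S=s] E[R(0)|S=s] / (nu E[R(1)|S=s] + (1-nu) E[R(0)|S=s]) with Lambda = E[E[R(1)|S] E[R(0)|S] / (nu E[R(1)|S] + (1-nu) E[R(0)|S])]. -/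
open MeasureTheory ProbabilityTheory

/-!
On a fibre `{S = s}` of positive mass, conditional independence given `S` makes `Y d` and `R d`
independent under the conditional measure `μ[|S ← s]`, so `E[R(d)Y(d) | S = s]` factorises as
`E[R(d) | S = s] E[Y(d) | S = s]`. Hence the numerator of the integrand of `θ_sfe` is
`τ(s) E[R(1) | S = s] E[R(0) | S = s]`, and since almost every `ω` lies in a fibre of positive mass,
the two integrands agree almost everywhere.
-/

namespace ProbabilityTheory

variable {Ω 𝒮 : Type*} {mΩ : MeasurableSpace Ω} {μ : Measure Ω}

theorem _root_.MeasureTheory.Integrable.cond {E : Type*} [NormedAddCommGroup E] {f : Ω → E}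
    (hf : Integrable f μ) (s : Set Ω) : Integrable f μ[|s] := by
  by_cases hs : μ s = 0
  · simp [cond_eq_zero_of_meas_eq_zero hs]
  · exact hf.restrict.smul_measure (ENNReal.inv_ne_top.2 hs)

theorem ae_measure_preimage_singleton_ne_zero [Countable 𝒮] (S : Ω → 𝒮) :
    ∀ᵐ ω ∂μ, μ (S ⁻¹' {S ω}) ≠ 0 := by
  have hnull : {ω | μ (S ⁻¹' {S ω}) = 0} = ⋃ s ∈ {s | μ (S ⁻¹' {s}) = 0}, S ⁻¹' {s} := by
    ext; simp
  simp only [ae_iff, not_not, hnull]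
  exact (measure_biUnion_null_iff (Set.to_countable _)).2 fun _ hs ↦ hs

variable {F : Type*} [NormedAddCommGroup F] [NormedSpace ℝ F] [CompleteSpace F]
  [MeasurableSpace 𝒮] [MeasurableSingletonClass 𝒮] {S : Ω → 𝒮}

theorem condExp_comap_ae_eq_integral_cond [IsFiniteMeasure μ] (hS : Measurable S) {f : Ω → F}
    (hf : Integrable f μ) (s : 𝒮) :
    μ[f | MeasurableSpace.comap S inferInstance]
      =ᵐ[μ.restrict (S ⁻¹' {s})] fun _ ↦ ∫ ω, f ω ∂μ[|S ← s] := by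
  have hA : MeasurableSet[MeasurableSpace.comap S inferInstance] (S ⁻¹' {s}) :=
    ⟨{s}, measurableSet_singleton s, rfl⟩
  obtain ⟨h, -, hh⟩ := (stronglyMeasurable_condExp (μ := μ) (f := f)
    (m := MeasurableSpace.comap S inferInstance)).exists_eq_measurable_comp
  have hconst : ∀ ω ∈ S ⁻¹' {s}, μ[f | MeasurableSpace.comap S inferInstance] ω = h s := by
    intro ω hω
    rw [hh, Function.comp_apply, show S ω = s from hω]
  by_cases hμs : μ (S ⁻¹' {s}) = 0
  · rw [Measure.restrict_eq_zero.2 hμs]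
    rfl
  refine (ae_restrict_of_forall_mem (hS (measurableSet_singleton s)) hconst).mono fun ω hω ↦ ?_
  have hint : μ.real (S ⁻¹' {s}) • h s = ∫ ω in S ⁻¹' {s}, f ω ∂μ := by
    rw [← setIntegral_condExp hS.comap_le hf hA,
      setIntegral_congr_fun (hS (measurableSet_singleton s)) hconst, setIntegral_const]
  rw [hω, cond, integral_smul_measure, ← hint, ENNReal.toReal_inv, ← measureReal_def,
    inv_smul_smul₀ ((measureReal_ne_zero_iff (measure_ne_top _ _)).2 hμs)]

theorem eq_integral_cond_of_condExp_ae_eq [IsFiniteMeasure μ] (hS : Measurable S) {f : Ω → F}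
    (hf : Integrable f μ) {v : 𝒮 → F}
    (hv : μ[f | MeasurableSpace.comap S inferInstance] =ᵐ[μ] fun ω ↦ v (S ω)) {s : 𝒮}
    (hs : μ (S ⁻¹' {s}) ≠ 0) :
    v s = ∫ ω, f ω ∂μ[|S ← s] := by
  have : (ae (μ.restrict (S ⁻¹' {s}))).NeBot := ae_neBot.2 (by rwa [Ne, Measure.restrict_eq_zero])
  obtain ⟨ω, hω, hvω, hfω⟩ := ((ae_restrict_mem (hS (measurableSet_singleton s))).and
    ((ae_restrict_of_ae hv).and (condExp_comap_ae_eq_integral_cond hS hf s))).exists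
  calc v s = v (S ω) := by rw [show S ω = s from hω]
    _ = ∫ ω, f ω ∂μ[|S ← s] := hvω.symm.trans hfω

theorem CondIndepFun.indepFun_cond_preimage_singleton [StandardBorelSpace Ω] [IsFiniteMeasure μ]
    {β γ : Type*} [MeasurableSpace β] [MeasurableSpace γ] {f : Ω → β} {g : Ω → γ}
    (hf : Measurable f) (hg : Measurable g) (hS : Measurable S)
    (hfg : CondIndepFun (MeasurableSpace.comap S inferInstance) hS.comap_le f g μ) (s : 𝒮) :
    IndepFun f g μ[|S ← s] := by
  rw [indepFun_iff_measure_inter_preimage_eq_mul]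
  intro u v hu hv
  by_cases hμs : μ (S ⁻¹' {s}) = 0
  · simp [cond_eq_zero_of_meas_eq_zero hμs]
  have : IsProbabilityMeasure μ[|S ← s] := cond_isProbabilityMeasure hμs
  have hprob : ∀ t, MeasurableSet t → μ⟦t | MeasurableSpace.comap S inferInstance⟧
      =ᵐ[μ.restrict (S ⁻¹' {s})] fun _ ↦ μ[|S ← s].real t := fun t ht ↦
    (condExp_comap_ae_eq_integral_cond hS ((integrable_const (1 : ℝ)).indicator ht) s).mono
      fun _ h ↦ h.trans (integral_indicator_one ht)
  have : (ae (μ.restrict (S ⁻¹' {s}))).NeBot :=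
    ae_neBot.2 (by rwa [Ne, Measure.restrict_eq_zero])
  obtain ⟨ω, hmul, hBC, hB, hC⟩ := ((ae_restrict_of_ae
    ((condIndepFun_iff_condExp_inter_preimage_eq_mul hf hg).1 hfg u v hu hv)).and
    ((hprob _ ((hf hu).inter (hg hv))).and ((hprob _ (hf hu)).and (hprob _ (hg hv))))).exists
  simp only at hmul hBC hB hC
  rw [hBC, hB, hC, measureReal_def, measureReal_def, measureReal_def, ← ENNReal.toReal_mul] at hmul
  exact (ENNReal.toReal_eq_toReal_iff' (measure_ne_top _ _) (by finiteness)).1 hmul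

end ProbabilityTheory

theorem corollary_3_2_b_general
    {Ω : Type*} [MeasurableSpace Ω] [StandardBorelSpace Ω]
    (μ : Measure Ω) [IsProbabilityMeasure μ]
    {𝒮 : Type*} [Fintype 𝒮] [MeasurableSpace 𝒮] [MeasurableSingletonClass 𝒮]
    (Y : Fin 2 → Ω → ℝ) (R : Fin 2 → Ω → ℝ) (S : Ω → 𝒮)
    (hYmeas : ∀ d, Measurable (Y d)) (hRmeas : ∀ d, Measurable (R d))
    (hSmeas : Measurable S)
    (hR01 : ∀ d ω, R d ω = 0 ∨ R d ω = 1)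
    (hYint : ∀ d, Integrable (Y d) μ)
    (ν : ℝ)
    (hle : MeasurableSpace.comap S inferInstance ≤ ‹MeasurableSpace Ω›)
    (q : Fin 2 → 𝒮 → ℝ) (qy : Fin 2 → 𝒮 → ℝ) (τ : 𝒮 → ℝ)
    (hq : ∀ d, μ[R d | MeasurableSpace.comap S inferInstance]
      =ᵐ[μ] fun ω => q d (S ω))
    (hqy : ∀ d, μ[fun ω => R d ω * Y d ω | MeasurableSpace.comap S inferInstance]
      =ᵐ[μ] fun ω => qy d (S ω))
    (hτ : μ[fun ω => Y 1 ω - Y 0 ω | MeasurableSpace.comap S inferInstance]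
      =ᵐ[μ] fun ω => τ (S ω))
    (Λ : ℝ)
    (hCI : CondIndepFun (MeasurableSpace.comap S inferInstance) hle
      (fun ω => (Y 1 ω, Y 0 ω)) (fun ω => (R 1 ω, R 0 ω)) μ) :
    Λ⁻¹ * ∫ ω, (qy 1 (S ω) * q 0 (S ω) - qy 0 (S ω) * q 1 (S ω))
        / (ν * q 1 (S ω) + (1 - ν) * q 0 (S ω)) ∂μ
      = ∫ ω, τ (S ω) *
          (Λ⁻¹ * (q 1 (S ω) * q 0 (S ω) / (ν * q 1 (S ω) + (1 - ν) * q 0 (S ω)))) ∂μ := by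
  have hRbound : ∀ d ω, ‖R d ω‖ ≤ 1 := fun d ω ↦ by rcases hR01 d ω with h | h <;> simp [h]
  have hRint : ∀ d, Integrable (R d) μ := fun d ↦
    .of_bound (hRmeas d).aestronglyMeasurable 1 (.of_forall (hRbound d))
  have hRYint : ∀ d, Integrable (fun ω ↦ R d ω * Y d ω) μ := fun d ↦
    (hYint d).bdd_mul (hRmeas d).aestronglyMeasurable (.of_forall (hRbound d))
  have hindep : ∀ d s, IndepFun (R d) (Y d) μ[|S ← s] := by
    intro d s
    have hpair := hCI.symm.indepFun_cond_preimage_singleton ((hRmeas 1).prodMk (hRmeas 0))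
      ((hYmeas 1).prodMk (hYmeas 0)) hSmeas s
    fin_cases d
    exacts [hpair.comp measurable_snd measurable_snd, hpair.comp measurable_fst measurable_fst]
  rw [← integral_const_mul]
  refine integral_congr_ae ?_
  filter_upwards [ae_measure_preimage_singleton_ne_zero S] with ω hω
  have hq' d := eq_integral_cond_of_condExp_ae_eq hSmeas (hRint d) (hq d) hω
  have hqy' d := eq_integral_cond_of_condExp_ae_eq hSmeas (hRYint d) (hqy d) hω
  have hτ' := eq_integral_cond_of_condExp_ae_eq hSmeas ((hYint 1).sub (hYint 0)) hτ hω
  rw [integral_sub' ((hYint 1).cond _) ((hYint 0).cond _)] at hτ'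
  simp only [(hindep _ _).integral_fun_mul_eq_mul_integral (hRmeas _).aestronglyMeasurable
    (hYmeas _).aestronglyMeasurable, ← hq'] at hqy'
  rw [hqy' 1, hqy' 0, hτ']
  ring

/-- Corollary 3.2(b): if `(Y(1), Y(0))` is conditionally independent of `(R(1), R(0))` given `S`,
then `θ_sfe = E[τ(S) λ(S)]`, where `τ(s) = E[Y(1) - Y(0) | S = s]` and
`λ(s) = Λ⁻¹ E[R(1)|S=s] E[R(0)|S=s] / (ν E[R(1)|S=s] + (1-ν) E[R(0)|S=s])` with
`Λ = E[E[R(1)|S] E[R(0)|S] / (ν E[R(1)|S] + (1-ν) E[R(0)|S])]`.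
Here `q d`, `qy d` and `τ` are versions of `E[R(d)|S=·]`, `E[R(d)Y(d)|S=·]`, `E[Y(1)-Y(0)|S=·]`. -/
theorem corollary_3_2_b
    {Ω : Type*} [MeasurableSpace Ω] [StandardBorelSpace Ω] [Nonempty Ω]
    (μ : Measure Ω) [IsProbabilityMeasure μ]
    {𝒮 : Type*} [Fintype 𝒮] [MeasurableSpace 𝒮] [MeasurableSingletonClass 𝒮]
    (Y : Fin 2 → Ω → ℝ) (R : Fin 2 → Ω → ℝ) (S : Ω → 𝒮)
    (hYmeas : ∀ d, Measurable (Y d)) (hRmeas : ∀ d, Measurable (R d))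
    (hSmeas : Measurable S)
    (hR01 : ∀ d ω, R d ω = 0 ∨ R d ω = 1)
    (hYint : ∀ d, Integrable (Y d) μ)
    (hRpos : ∀ d, 0 < ∫ ω, R d ω ∂μ)
    (ν : ℝ) (hν : 0 < ν ∧ ν < 1)
    (hle : MeasurableSpace.comap S inferInstance ≤ ‹MeasurableSpace Ω›)
    (q : Fin 2 → 𝒮 → ℝ) (qy : Fin 2 → 𝒮 → ℝ) (τ : 𝒮 → ℝ)
    (hq : ∀ d, μ[R d | MeasurableSpace.comap S inferInstance]
      =ᵐ[μ] fun ω => q d (S ω))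
    (hqy : ∀ d, μ[fun ω => R d ω * Y d ω | MeasurableSpace.comap S inferInstance]
      =ᵐ[μ] fun ω => qy d (S ω))
    (hτ : μ[fun ω => Y 1 ω - Y 0 ω | MeasurableSpace.comap S inferInstance]
      =ᵐ[μ] fun ω => τ (S ω))
    (Λ : ℝ)
    (hΛ : Λ = ∫ ω, q 1 (S ω) * q 0 (S ω) / (ν * q 1 (S ω) + (1 - ν) * q 0 (S ω)) ∂μ)
    (hΛpos : 0 < Λ)
    (hCI : CondIndepFun (MeasurableSpace.comap S inferInstance) hle
      (fun ω => (Y 1 ω, Y 0 ω)) (fun ω => (R 1 ω, R 0 ω)) μ) :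
    Λ⁻¹ * ∫ ω, (qy 1 (S ω) * q 0 (S ω) - qy 0 (S ω) * q 1 (S ω))
        / (ν * q 1 (S ω) + (1 - ν) * q 0 (S ω)) ∂μ
      = ∫ ω, τ (S ω) *
          (Λ⁻¹ * (q 1 (S ω) * q 0 (S ω) / (ν * q 1 (S ω) + (1 - ν) * q 0 (S ω)))) ∂μ :=
  corollary_3_2_b_general μ Y R S hYmeas hRmeas hSmeas hR01 hYint ν hle q qy τ hq hqy hτ Λ hCI
end

section
/- (Corollary 3.2(c).) If S is independent of (R(1),R(0)), then theta_sfe = theta_obs, i.e., Lambda^{-1} E[(E[R(1)Y(1)|S] E[R(0)|S] - E[R(0)Y(0)|S] E[R(1)|S]) / (nu E[R(1)|S] + (1-nu) E[R(0)|S])] = E[R(1)Y(1)]/E[R(1)] - E[R(0)Y(0)]/E[R(0)]. -/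
/-!
Independence of `S` and `(R(1), R(0))` makes `E[R(d) | S]` almost surely equal to the constant
`r_d = E[R(d)]`. The weights in `θ_sfe` are then constant, so `Λ = r₁ r₀ / (ν r₁ + (1-ν) r₀)`, and the
tower property turns the remaining integral into `(E[R(1)Y(1)] r₀ - E[R(0)Y(0)] r₁) / (ν r₁ + (1-ν) r₀)`;
dividing by `Λ` gives `θ_obs`.
-/

open MeasureTheory ProbabilityTheory

section

variable {Ω 𝒮 γ : Type*} [MeasurableSpace Ω] {μ : Measure Ω}
  [MeasurableSpace 𝒮] [MeasurableSpace γ] {S : Ω → 𝒮}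

theorem condExp_comap_ae_eq_integral_of_indepFun [IsFiniteMeasure μ] {Z : Ω → γ}
    (hS : Measurable S) (hZ : Measurable Z) (hind : IndepFun S Z μ)
    {φ : γ → ℝ} (hφ : Measurable φ) :
    μ[fun ω => φ (Z ω) | MeasurableSpace.comap S inferInstance]
      =ᵐ[μ] fun _ => ∫ ω, φ (Z ω) ∂μ :=
  condExp_indep_eq hZ.comap_le hS.comap_le
    (hφ.comp (comap_measurable Z)).stronglyMeasurable hind.symm

theorem integral_comp_eq_of_condExp_comap_ae_eq [IsFiniteMeasure μ] (hS : Measurable S)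
    {f : Ω → ℝ} {g : 𝒮 → ℝ}
    (h : μ[f | MeasurableSpace.comap S inferInstance] =ᵐ[μ] fun ω => g (S ω)) :
    ∫ ω, g (S ω) ∂μ = ∫ ω, f ω ∂μ := by
  rw [← integral_congr_ae h, integral_condExp hS.comap_le]

end

section

variable {Ω : Type*} [MeasurableSpace Ω] {μ : Measure Ω}
  {a₁ a₀ b₁ b₀ : Ω → ℝ} {r₁ r₀ ν : ℝ}

theorem integral_div_weight_of_ae_eq_const (ha₁ : Integrable a₁ μ) (ha₀ : Integrable a₀ μ)
    (hb₁ : b₁ =ᵐ[μ] fun _ => r₁) (hb₀ : b₀ =ᵐ[μ] fun _ => r₀) :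
    ∫ ω, (a₁ ω * b₀ ω - a₀ ω * b₁ ω) / (ν * b₁ ω + (1 - ν) * b₀ ω) ∂μ
      = ((∫ ω, a₁ ω ∂μ) * r₀ - (∫ ω, a₀ ω ∂μ) * r₁) / (ν * r₁ + (1 - ν) * r₀) := by
  have hconst : (fun ω => (a₁ ω * b₀ ω - a₀ ω * b₁ ω) / (ν * b₁ ω + (1 - ν) * b₀ ω))
      =ᵐ[μ] fun ω => (a₁ ω * r₀ - a₀ ω * r₁) / (ν * r₁ + (1 - ν) * r₀) := by
    filter_upwards [hb₁, hb₀] with ω h₁ h₀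
    rw [h₁, h₀]
  rw [integral_congr_ae hconst, integral_div,
    integral_sub (ha₁.mul_const _) (ha₀.mul_const _), integral_mul_const, integral_mul_const]

theorem integral_harmonic_weight_of_ae_eq_const [IsProbabilityMeasure μ]
    (hb₁ : b₁ =ᵐ[μ] fun _ => r₁) (hb₀ : b₀ =ᵐ[μ] fun _ => r₀) :
    ∫ ω, b₁ ω * b₀ ω / (ν * b₁ ω + (1 - ν) * b₀ ω) ∂μ
      = r₁ * r₀ / (ν * r₁ + (1 - ν) * r₀) := by
  have hconst : (fun ω => b₁ ω * b₀ ω / (ν * b₁ ω + (1 - ν) * b₀ ω))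
      =ᵐ[μ] fun _ => r₁ * r₀ / (ν * r₁ + (1 - ν) * r₀) := by
    filter_upwards [hb₁, hb₀] with ω h₁ h₀
    rw [h₁, h₀]
  rw [integral_congr_ae hconst, integral_const, probReal_univ, one_smul]

end

theorem inv_mul_div_eq_div_sub_div {Λ r₁ r₀ c x₁ x₀ : ℝ} (hΛ : Λ = r₁ * r₀ / c) (hΛ0 : Λ ≠ 0) :
    Λ⁻¹ * ((x₁ * r₀ - x₀ * r₁) / c) = x₁ / r₁ - x₀ / r₀ := by
  subst hΛ
  have hr₁ : r₁ ≠ 0 := by rintro rfl; simp at hΛ0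
  have hr₀ : r₀ ≠ 0 := by rintro rfl; simp at hΛ0
  have hc : c ≠ 0 := by rintro rfl; simp at hΛ0
  field_simp

theorem corollary_3_2_c_general
    {Ω : Type*} [MeasurableSpace Ω] (μ : Measure Ω) [IsProbabilityMeasure μ]
    {𝒮 : Type*} [MeasurableSpace 𝒮]
    (Y : Fin 2 → Ω → ℝ) (R : Fin 2 → Ω → ℝ) (S : Ω → 𝒮)
    (hRmeas : ∀ d, Measurable (R d))
    (hSmeas : Measurable S)
    (ν : ℝ)
    (q : Fin 2 → 𝒮 → ℝ) (qy : Fin 2 → 𝒮 → ℝ)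
    (hq : ∀ d, μ[R d | MeasurableSpace.comap S inferInstance]
      =ᵐ[μ] fun ω => q d (S ω))
    (hqy : ∀ d, μ[fun ω => R d ω * Y d ω | MeasurableSpace.comap S inferInstance]
      =ᵐ[μ] fun ω => qy d (S ω))
    (Λ : ℝ)
    (hΛ : Λ = ∫ ω, q 1 (S ω) * q 0 (S ω) / (ν * q 1 (S ω) + (1 - ν) * q 0 (S ω)) ∂μ)
    (hΛpos : 0 < Λ)
    (hindep : IndepFun S (fun ω => (R 1 ω, R 0 ω)) μ) :
    Λ⁻¹ * ∫ ω, (qy 1 (S ω) * q 0 (S ω) - qy 0 (S ω) * q 1 (S ω))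
        / (ν * q 1 (S ω) + (1 - ν) * q 0 (S ω)) ∂μ
      = (∫ ω, R 1 ω * Y 1 ω ∂μ) / (∫ ω, R 1 ω ∂μ)
        - (∫ ω, R 0 ω * Y 0 ω ∂μ) / (∫ ω, R 0 ω ∂μ) := by
  have hpair : Measurable fun ω => (R 1 ω, R 0 ω) := (hRmeas 1).prodMk (hRmeas 0)
  have hq_const : ∀ d, (fun ω => q d (S ω)) =ᵐ[μ] fun _ => ∫ ω, R d ω ∂μ := by
    intro d
    refine (hq d).symm.trans ?_
    fin_cases d
    · exact condExp_comap_ae_eq_integral_of_indepFun hSmeas hpair hindep measurable_snd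
    · exact condExp_comap_ae_eq_integral_of_indepFun hSmeas hpair hindep measurable_fst
  have hqy_int : ∀ d, Integrable (fun ω => qy d (S ω)) μ :=
    fun d => integrable_condExp.congr (hqy d)
  rw [integral_div_weight_of_ae_eq_const (hqy_int 1) (hqy_int 0) (hq_const 1) (hq_const 0),
    integral_comp_eq_of_condExp_comap_ae_eq hSmeas (hqy 1),
    integral_comp_eq_of_condExp_comap_ae_eq hSmeas (hqy 0)]
  exact inv_mul_div_eq_div_sub_div
    (hΛ.trans (integral_harmonic_weight_of_ae_eq_const (hq_const 1) (hq_const 0))) hΛpos.ne'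

/-- Corollary 3.2(c): if `S` is independent of `(R(1), R(0))`, then `θ_sfe = θ_obs`, i.e.
`Λ⁻¹ E[(E[R(1)Y(1)|S] E[R(0)|S] - E[R(0)Y(0)|S] E[R(1)|S]) / (ν E[R(1)|S] + (1-ν) E[R(0)|S])]
  = E[R(1)Y(1)]/E[R(1)] - E[R(0)Y(0)]/E[R(0)]`.
Here `q d` and `qy d` are versions of `E[R(d)|S=·]` and `E[R(d)Y(d)|S=·]`. -/
theorem corollary_3_2_c
    {Ω : Type*} [MeasurableSpace Ω] (μ : Measure Ω) [IsProbabilityMeasure μ]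
    {𝒮 : Type*} [Fintype 𝒮] [MeasurableSpace 𝒮] [MeasurableSingletonClass 𝒮]
    (Y : Fin 2 → Ω → ℝ) (R : Fin 2 → Ω → ℝ) (S : Ω → 𝒮)
    (hYmeas : ∀ d, Measurable (Y d)) (hRmeas : ∀ d, Measurable (R d))
    (hSmeas : Measurable S)
    (hR01 : ∀ d ω, R d ω = 0 ∨ R d ω = 1)
    (hYint : ∀ d, Integrable (Y d) μ)
    (hRpos : ∀ d, 0 < ∫ ω, R d ω ∂μ)
    (ν : ℝ) (hν : 0 < ν ∧ ν < 1)
    (q : Fin 2 → 𝒮 → ℝ) (qy : Fin 2 → 𝒮 → ℝ)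
    (hq : ∀ d, μ[R d | MeasurableSpace.comap S inferInstance]
      =ᵐ[μ] fun ω => q d (S ω))
    (hqy : ∀ d, μ[fun ω => R d ω * Y d ω | MeasurableSpace.comap S inferInstance]
      =ᵐ[μ] fun ω => qy d (S ω))
    (Λ : ℝ)
    (hΛ : Λ = ∫ ω, q 1 (S ω) * q 0 (S ω) / (ν * q 1 (S ω) + (1 - ν) * q 0 (S ω)) ∂μ)
    (hΛpos : 0 < Λ)
    (hindep : IndepFun S (fun ω => (R 1 ω, R 0 ω)) μ) :
    Λ⁻¹ * ∫ ω, (qy 1 (S ω) * q 0 (S ω) - qy 0 (S ω) * q 1 (S ω))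
        / (ν * q 1 (S ω) + (1 - ν) * q 0 (S ω)) ∂μ
      = (∫ ω, R 1 ω * Y 1 ω ∂μ) / (∫ ω, R 1 ω ∂μ)
        - (∫ ω, R 0 ω * Y 0 ω ∂μ) / (∫ ω, R 0 ω ∂μ) :=
  corollary_3_2_c_general μ Y R S hRmeas hSmeas ν q qy hq hqy Λ hΛ hΛpos hindep
end
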